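/- arXiv:2512.21278 — 10 statements merged into one kernel-verified Lean document; each statement's English description precedes it below -/
import Mathlib

section
/- Let L be a first-order language and let S and T be L-theories such that: (i) every L-formula is equivalent modulo S to an existential positive L-formula (S is a model-complete core theory), and (ii) every model of T admits an L-homomorphism into some model of S. Let M be a model of S, N a model of T, and f : M → N an L-homomorphism. Then f is injective, and moreover for every L-formula φ(x₁,…,xₙ) there exists an existential positive L-formula θ(x₁,…,xₙ) such that for every n-tuple ā from M we have: M ⊨ φ(ā) if and only if N ⊨ θ(f(ā)) (so f is a trace definition of M in N). -/
open FirstOrder FirstOrder.Language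

universe u v w

/-- Existential positive formulas: built from atomic formulas (equalities and relations)
using only conjunction, disjunction, and existential quantification. -/
inductive IsExistentialPositive {L : FirstOrder.Language.{u, v}} {α : Type*} :
    ∀ {n : ℕ}, L.BoundedFormula α n → Prop
  | equal {n : ℕ} (t₁ t₂ : L.Term (α ⊕ Fin n)) :
      IsExistentialPositive (BoundedFormula.equal t₁ t₂)
  | rel {n l : ℕ} (R : L.Relations l) (ts : Fin l → L.Term (α ⊕ Fin n)) :
      IsExistentialPositive (BoundedFormula.rel R ts)
  | inf {n : ℕ} {φ ψ : L.BoundedFormula α n} :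
      IsExistentialPositive φ → IsExistentialPositive ψ → IsExistentialPositive (φ ⊓ ψ)
  | sup {n : ℕ} {φ ψ : L.BoundedFormula α n} :
      IsExistentialPositive φ → IsExistentialPositive ψ → IsExistentialPositive (φ ⊔ ψ)
  | ex {n : ℕ} {φ : L.BoundedFormula α (n + 1)} :
      IsExistentialPositive φ → IsExistentialPositive φ.ex

lemma ep_hom_preserved {L : FirstOrder.Language.{u, v}} {M N : Type*}
    [L.Structure M] [L.Structure N] (f : M →[L] N) {α : Type*} :
    ∀ {n : ℕ} {φ : L.BoundedFormula α n}, IsExistentialPositive φ →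
      ∀ (v : α → M) (xs : Fin n → M),
        φ.Realize v xs → φ.Realize (f ∘ v) (f ∘ xs) := by
  intro n φ h
  induction h with
  | equal t₁ t₂ =>
      intro v xs h
      have h' : Term.realize (Sum.elim v xs) t₁ = Term.realize (Sum.elim v xs) t₂ := h
      show Term.realize (Sum.elim (f ∘ v) (f ∘ xs)) t₁
          = Term.realize (Sum.elim (f ∘ v) (f ∘ xs)) t₂
      rw [← Sum.comp_elim, HomClass.realize_term, HomClass.realize_term, h']
  | rel R ts =>
      intro v xs h
      have h' : Structure.RelMap R (fun i => Term.realize (Sum.elim v xs) (ts i)) := h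
      show Structure.RelMap R (fun i => Term.realize (Sum.elim (f ∘ v) (f ∘ xs)) (ts i))
      have heq : (fun i => Term.realize (Sum.elim (f ∘ v) (f ∘ xs)) (ts i))
          = (fun i => f (Term.realize (Sum.elim v xs) (ts i))) := by
        funext i
        rw [← Sum.comp_elim, HomClass.realize_term]
      rw [heq]
      exact f.map_rel R _ h'
  | inf _ _ ih₁ ih₂ =>
      intro v xs h
      rw [BoundedFormula.realize_inf] at *
      exact ⟨ih₁ v xs h.1, ih₂ v xs h.2⟩
  | sup _ _ ih₁ ih₂ =>
      intro v xs h
      rw [BoundedFormula.realize_sup] at *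
      exact h.imp (ih₁ v xs) (ih₂ v xs)
  | ex _ ih =>
      intro v xs h
      rw [BoundedFormula.realize_ex] at *
      obtain ⟨a, ha⟩ := h
      refine ⟨f a, ?_⟩
      have := ih v (Fin.snoc xs a) ha
      rwa [Fin.comp_snoc] at this

lemma ep_hom_formula {L : FirstOrder.Language.{u, v}} {M N : Type*}
    [L.Structure M] [L.Structure N] (f : M →[L] N) {α : Type*} {θ : L.Formula α}
    (h : IsExistentialPositive θ) (v : α → M) (hr : θ.Realize v) :
    θ.Realize (f ∘ v) := by
  have h2 := ep_hom_preserved f h v default hr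
  rwa [show f ∘ (default : Fin 0 → M) = default from funext (fun i => i.elim0)] at h2

/-- If `S` is a model-complete core theory, every model of `T` maps homomorphically into a
model of `S`, `M ⊨ S`, `N ⊨ T`, and `f : M → N` is a homomorphism, then `f` is injective and
is a trace definition of `M` in `N`: every formula is traced by an existential positive one. -/
theorem hom_to_core_is_trace_definition {L : FirstOrder.Language.{u, v}} (S T : L.Theory)
    (hS : ∀ (n : ℕ) (φ : L.Formula (Fin n)), ∃ θ : L.Formula (Fin n),
      IsExistentialPositive θ ∧
        ∀ (M : Type w) [L.Structure M] [M ⊨ S] (v : Fin n → M),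
          φ.Realize v ↔ θ.Realize v)
    (hhom : ∀ (P : Type w) [iP : L.Structure P] [P ⊨ T],
      ∃ (Q : Type w) (iQ : L.Structure Q),
        @Theory.Model L Q iQ S ∧ Nonempty (@FirstOrder.Language.Hom L P Q iP iQ))
    (M N : Type w) [L.Structure M] [L.Structure N] [M ⊨ S] [N ⊨ T]
    (f : M →[L] N) :
    Function.Injective f ∧
      ∀ (n : ℕ) (φ : L.Formula (Fin n)), ∃ θ : L.Formula (Fin n),
        IsExistentialPositive θ ∧
          ∀ va : Fin n → M, (φ.Realize va ↔ θ.Realize (fun i => f (va i))) := by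
  obtain ⟨Q, iQ, hQS, ⟨g⟩⟩ := hhom N
  haveI := hQS
  have key : ∀ (n : ℕ) (φ : L.Formula (Fin n)), ∃ θ : L.Formula (Fin n),
      IsExistentialPositive θ ∧
        ∀ va : Fin n → M, (φ.Realize va ↔ θ.Realize (fun i => f (va i))) := by
    intro n φ
    obtain ⟨θ, hθep, hθ⟩ := hS n φ
    obtain ⟨θ', hθ'ep, hθ'⟩ := hS n (∼φ)
    refine ⟨θ, hθep, fun va => ⟨?_, ?_⟩⟩
    · intro h
      exact ep_hom_formula f hθep va ((hθ M va).mp h)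
    · intro h
      by_contra hc
      have h1 : Formula.Realize (∼φ) va := by
        rw [Formula.realize_not]; exact hc
      have h2 : θ'.Realize (g ∘ f ∘ va) := by
        have := ep_hom_formula f hθ'ep va ((hθ' M va).mp h1)
        exact ep_hom_formula g hθ'ep (f ∘ va) this
      have h3 : θ.Realize (g ∘ f ∘ va) :=
        ep_hom_formula g hθep (fun i => f (va i)) h
      have h4 : φ.Realize (g ∘ f ∘ va) := (hθ Q (g ∘ f ∘ va)).mpr h3
      have h5 : Formula.Realize (∼φ) (g ∘ f ∘ va) := (hθ' Q (g ∘ f ∘ va)).mpr h2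
      rw [Formula.realize_not] at h5
      exact h5 h4
  refine ⟨?_, key⟩
  intro a b hab
  obtain ⟨θ, hep, hθ⟩ := key 2 (∼(Term.equal (Term.var 0) (Term.var 1)))
  by_contra hne
  have h1 : Formula.Realize (∼(Term.equal (Term.var (0 : Fin 2)) (Term.var 1) : L.Formula (Fin 2))) ![a, b] := by
    simp [Formula.realize_not, Term.equal, Formula.Realize, BoundedFormula.realize_bdEqual, hne]
  have h2 := (hθ ![a, b]).mp h1
  have h3 : ¬ Formula.Realize (∼(Term.equal (Term.var (0 : Fin 2)) (Term.var 1) : L.Formula (Fin 2))) ![a, a] := by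
    simp [Formula.realize_not, Term.equal, Formula.Realize, BoundedFormula.realize_bdEqual]
  have heq : (fun i => f (![a, b] i)) = (fun i => f (![a, a] i)) := by
    funext i
    fin_cases i <;> simp [hab]
  rw [heq] at h2
  exact h3 ((hθ ![a, a]).mpr h2)
end

section
/- Let L be a first-order language and let S and T be L-theories such that: (i) every L-formula is equivalent modulo S to an existential positive L-formula (S is a model-complete core theory), and (ii) every model of T admits an L-homomorphism into some model of S. Let M be a model of S, N a model of T, f : M → N an L-homomorphism, and C a subset of M. If two n-tuples ā and ā′ from M realize distinct types over C in M — that is, there exist an L-formula φ(x̄, ȳ) and a tuple c̄ of elements of C with M ⊨ φ(ā, c̄) and M ⊨ ¬φ(ā′, c̄) — then f(ā) and f(ā′) realize distinct types over the image f(C) in N: there exist an L-formula χ(x̄, ȳ′) and a tuple d̄ of elements of f(C) with N ⊨ χ(f(ā), d̄) and N ⊨ ¬χ(f(ā′), d̄). -/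
open FirstOrder FirstOrder.Language

universe u v w

lemma IsExistentialPositive.relabel {L : FirstOrder.Language.{u, v}} {α β : Type*} {k : ℕ}
    (g : α → β ⊕ Fin k) : ∀ {n : ℕ} {φ : L.BoundedFormula α n},
    IsExistentialPositive φ → IsExistentialPositive (φ.relabel g) := by
  intro n φ h
  induction h with
  | equal t₁ t₂ => exact .equal _ _
  | rel R ts => exact .rel _ _
  | inf _ _ ih1 ih2 => exact .inf ih1 ih2
  | sup _ _ ih1 ih2 => exact .sup ih1 ih2
  | ex _ ih => rw [BoundedFormula.relabel_ex]; exact .ex ih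

lemma IsExistentialPositive.formulaRelabel {L : FirstOrder.Language.{u, v}} {α β : Type*}
    (g : α → β) {φ : L.Formula α} (h : IsExistentialPositive φ) :
    IsExistentialPositive (φ.relabel g) :=
  h.relabel _

lemma hom_realize_ep {L : FirstOrder.Language.{u, v}} {M : Type*} {N : Type*}
    [L.Structure M] [L.Structure N] (f : M →[L] N) {α : Type*} :
    ∀ {n : ℕ} {φ : L.BoundedFormula α n}, IsExistentialPositive φ →
      ∀ {v : α → M} {xs : Fin n → M}, φ.Realize v xs → φ.Realize (f ∘ v) (f ∘ xs) := by
  intro n φ h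
  induction h with
  | equal t₁ t₂ =>
    intro v xs hr
    simp only [BoundedFormula.Realize, ← Sum.comp_elim, HomClass.realize_term]
    exact congrArg f hr
  | rel R ts =>
    intro v xs hr
    simp only [BoundedFormula.Realize, ← Sum.comp_elim, HomClass.realize_term] at hr ⊢
    exact HomClass.map_rel f R _ hr
  | inf _ _ ih1 ih2 =>
    intro v xs hr
    rw [BoundedFormula.realize_inf] at hr ⊢
    exact ⟨ih1 hr.1, ih2 hr.2⟩
  | sup _ _ ih1 ih2 =>
    intro v xs hr
    rw [BoundedFormula.realize_sup] at hr ⊢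
    exact hr.elim (fun h' => Or.inl (ih1 h')) (fun h' => Or.inr (ih2 h'))
  | ex _ ih =>
    intro v xs hr
    rw [BoundedFormula.realize_ex] at hr ⊢
    obtain ⟨x, hx⟩ := hr
    exact ⟨f x, by rw [← Fin.comp_snoc]; exact ih hx⟩

lemma hom_realize_ep_formula {L : FirstOrder.Language.{u, v}} {M : Type*} {N : Type*}
    [L.Structure M] [L.Structure N] (f : M →[L] N) {α : Type*} {φ : L.Formula α}
    (h : IsExistentialPositive φ) {v : α → M} (hr : φ.Realize v) :
    φ.Realize (f ∘ v) := by
  have := hom_realize_ep f h (xs := (default : Fin 0 → M)) hr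
  rwa [Subsingleton.elim (f ∘ (default : Fin 0 → M)) default] at this

/-- If `S` is a model-complete core theory, every model of `T` maps homomorphically into a
model of `S`, and `f : M → N` is a homomorphism from a model of `S` to a model of `T`, then
tuples realizing distinct types over `C` in `M` are mapped to tuples realizing distinct types
over `f(C)` in `N`. -/
theorem hom_to_core_separates_types {L : FirstOrder.Language.{u, v}} (S T : L.Theory)
    (hS : ∀ (n : ℕ) (φ : L.Formula (Fin n)), ∃ θ : L.Formula (Fin n),
      IsExistentialPositive θ ∧
        ∀ (M : Type w) [L.Structure M] [M ⊨ S] (v : Fin n → M),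
          φ.Realize v ↔ θ.Realize v)
    (hhom : ∀ (P : Type w) [iP : L.Structure P] [P ⊨ T],
      ∃ (Q : Type w) (iQ : L.Structure Q),
        @Theory.Model L Q iQ S ∧ Nonempty (@FirstOrder.Language.Hom L P Q iP iQ))
    (M N : Type w) [L.Structure M] [L.Structure N] [M ⊨ S] [N ⊨ T]
    (f : M →[L] N) (C : Set M) (n : ℕ) (a a' : Fin n → M)
    (hdiff : ∃ (m : ℕ) (φ : L.Formula (Fin n ⊕ Fin m)) (c : Fin m → M),
      (∀ i, c i ∈ C) ∧
        φ.Realize (Sum.elim a c) ∧ ¬ φ.Realize (Sum.elim a' c)) :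
    ∃ (m : ℕ) (χ : L.Formula (Fin n ⊕ Fin m)) (d : Fin m → N),
      (∀ i, d i ∈ f '' C) ∧
        χ.Realize (Sum.elim (fun i => f (a i)) d) ∧
          ¬ χ.Realize (Sum.elim (fun i => f (a' i)) d) := by
  obtain ⟨m, φ, c, hC, hpos, hneg⟩ := hdiff
  -- relabel φ to have variables in Fin (n + m)
  set e : Fin n ⊕ Fin m ≃ Fin (n + m) := finSumFinEquiv
  obtain ⟨θ, hθep, hθ⟩ := hS (n + m) (φ.relabel e)
  obtain ⟨θ', hθ'ep, hθ'⟩ := hS (n + m) (Formula.not (φ.relabel e))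
  -- the separating formula and parameters
  refine ⟨m, θ.relabel e.symm, fun i => f (c i), fun i => ⟨c i, hC i, rfl⟩, ?_, ?_⟩
  · -- positive part
    have hM : θ.Realize (Sum.elim a c ∘ e.symm) := by
      rw [← hθ M]
      rw [Formula.realize_relabel]
      have : (Sum.elim a c ∘ e.symm) ∘ e = Sum.elim a c := by
        funext x; simp
      rw [this]; exact hpos
    have hN := hom_realize_ep_formula f hθep hM
    rw [Formula.realize_relabel]
    have : Sum.elim (fun i => f (a i)) (fun i => f (c i)) ∘ e.symm
        = f ∘ (Sum.elim a c ∘ e.symm) := by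
      funext x; cases h : e.symm x <;> simp [h]
    rw [this]; exact hN
  · -- negative part
    intro hcontra
    rw [Formula.realize_relabel] at hcontra
    have heq : Sum.elim (fun i => f (a' i)) (fun i => f (c i)) ∘ e.symm
        = f ∘ (Sum.elim a' c ∘ e.symm) := by
      funext x; cases h : e.symm x <;> simp [h]
    rw [heq] at hcontra
    -- M realizes θ'(a', c)
    have hM' : θ'.Realize (Sum.elim a' c ∘ e.symm) := by
      rw [← hθ' M, Formula.realize_not, Formula.realize_relabel]
      have : (Sum.elim a' c ∘ e.symm) ∘ e = Sum.elim a' c := by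
        funext x; simp
      rw [this]; exact hneg
    have hN' := hom_realize_ep_formula f hθ'ep hM'
    -- map N into a model Q of S
    obtain ⟨Q, iQ, hQS, ⟨g⟩⟩ := hhom N
    haveI := hQS
    have hQθ := hom_realize_ep_formula g hθep hcontra
    have hQθ' := hom_realize_ep_formula g hθ'ep hN'
    rw [← hθ Q] at hQθ
    rw [← hθ' Q, Formula.realize_not] at hQθ'
    exact hQθ' hQθ
end

section
/- Let 𝔄 be the L-structure with domain A = ℕ × {0,1,2}, where L has two unary relation symbols U₀, U₁ and two binary relation symbols N, R, interpreted by: U₀ = ℕ×{0}, U₁ = ℕ×{1}, N = {(u,v) ∈ (ℕ×{1})² ∪ (ℕ×{2})² : u ≠ v}, and R = {((n,0),(n,1)) : n ∈ ℕ} ∪ {((n,0),(n,2)) : n ∈ ℕ} ∪ {((0,0),(n,1)) : n ∈ ℕ} ∪ {((0,0),(n,2)) : n ∈ ℕ}. Then the complete first-order theory of 𝔄 is totally categorical: for every infinite cardinal κ, any two models of Th(𝔄) of cardinality κ are isomorphic. -/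
open FirstOrder FirstOrder.Language

universe w

/-- The domain `ℕ × {0,1,2}`. -/
abbrev SpiderDom : Type := ℕ × Fin 3

/-- The relation `N`: pairs of distinct elements both in `ℕ×{1}` or both in `ℕ×{2}`. -/
def SpiderN (u v : SpiderDom) : Prop :=
  ((u.2 = 1 ∧ v.2 = 1) ∨ (u.2 = 2 ∧ v.2 = 2)) ∧ u ≠ v

/-- The relation `R`. -/
def SpiderR (u v : SpiderDom) : Prop :=
  (u.2 = 0 ∧ v.2 = 1 ∧ u.1 = v.1) ∨ (u.2 = 0 ∧ v.2 = 2 ∧ u.1 = v.1) ∨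
    (u = ((0 : ℕ), (0 : Fin 3)) ∧ v.2 = 1) ∨ (u = ((0 : ℕ), (0 : Fin 3)) ∧ v.2 = 2)

/-- The relation symbols: two unary symbols (`U₀`, `U₁`) and two binary symbols (`N`, `R`). -/
def SpiderRels : ℕ → Type
  | 1 => Fin 2
  | 2 => Fin 2
  | _ => Empty

/-- The language with two unary relation symbols `U₀`, `U₁` and two binary relation
symbols `N`, `R`. -/
def SpiderLang : FirstOrder.Language := ⟨fun _ => Empty, SpiderRels⟩

/-- Interpretation of the unary relation symbols `U₀`, `U₁`. -/
def spiderUnary (r : Fin 2) (v : Fin 1 → SpiderDom) : Prop :=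
  if r = 0 then (v 0).2 = 0 else (v 0).2 = 1

/-- Interpretation of the binary relation symbols `N`, `R`. -/
def spiderBinary (r : Fin 2) (v : Fin 2 → SpiderDom) : Prop :=
  if r = 0 then SpiderN (v 0) (v 1) else SpiderR (v 0) (v 1)

/-- The interpretation of the relation symbols on `SpiderDom`. -/
def spiderRelInterp : ∀ n, SpiderRels n → (Fin n → SpiderDom) → Prop
  | 0, r, _ => r.elim
  | 1, r, v => spiderUnary r v
  | 2, r, v => spiderBinary r v
  | (_ + 3), r, _ => r.elim

/-- The structure 𝔄. -/
instance : SpiderLang.Structure SpiderDom where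
  funMap := fun f _ => f.elim
  RelMap := fun {n} r v => spiderRelInterp n r v

/-!
Every model `X` of `Th(𝔄)` is a spider: `U₀` contains a unique hub, `R`-related to everything
outside `U₀`; every other point `t` of `U₀` (a leg) is `R`-related to exactly one point of `U₁`
and one point of `U₂ = ¬U₀ ∧ ¬U₁`, injectively in `t`; and each of `U₁`, `U₂` has exactly one
spare point reached from no leg. These are first-order properties of `𝔄`, hence of `X`, and
they present `X` as `Option Bool × Option (legs of X)` with relations defined from the
coordinates alone. So `X` is determined by its set of legs, which for infinite `X` has the
cardinality of `X`.
-/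

namespace Spider

def symU₀ : SpiderLang.Relations 1 := (0 : Fin 2)
def symU₁ : SpiderLang.Relations 1 := (1 : Fin 2)
def symN : SpiderLang.Relations 2 := (0 : Fin 2)
def symR : SpiderLang.Relations 2 := (1 : Fin 2)

section Predicates

variable {X : Type*} [SpiderLang.Structure X]

def U₀ (x : X) : Prop := Structure.RelMap symU₀ ![x]
def U₁ (x : X) : Prop := Structure.RelMap symU₁ ![x]
def U₂ (x : X) : Prop := ¬ U₀ x ∧ ¬ U₁ x
def NRel (x y : X) : Prop := Structure.RelMap symN ![x, y]
def RRel (x y : X) : Prop := Structure.RelMap symR ![x, y]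

def Layer : Bool → X → Prop
  | true, x => U₁ x
  | false, x => U₂ x

def IsHub (a : X) : Prop := U₀ a ∧ ∀ y, ¬ U₀ y → RRel a y

end Predicates

section Sentences

variable {n : ℕ}

def fU₀ (t : SpiderLang.Term (Empty ⊕ Fin n)) : SpiderLang.BoundedFormula Empty n :=
  symU₀.boundedFormula₁ t
def fU₁ (t : SpiderLang.Term (Empty ⊕ Fin n)) : SpiderLang.BoundedFormula Empty n :=
  symU₁.boundedFormula₁ t
def fU₂ (t : SpiderLang.Term (Empty ⊕ Fin n)) : SpiderLang.BoundedFormula Empty n :=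
  ∼(fU₀ t) ⊓ ∼(fU₁ t)
def fN (t s : SpiderLang.Term (Empty ⊕ Fin n)) : SpiderLang.BoundedFormula Empty n :=
  symN.boundedFormula₂ t s
def fR (t s : SpiderLang.Term (Empty ⊕ Fin n)) : SpiderLang.BoundedFormula Empty n :=
  symR.boundedFormula₂ t s
def fLayer : Bool → SpiderLang.Term (Empty ⊕ Fin n) → SpiderLang.BoundedFormula Empty n
  | true, t => fU₁ t
  | false, t => fU₂ t
def fHub (t : SpiderLang.Term (Empty ⊕ Fin n)) : SpiderLang.BoundedFormula Empty n :=
  fU₀ t ⊓ ∀' (∼(fU₀ (Term.var (Sum.inr (Fin.last n)))) ⟹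
    fR (t.relabel (Sum.map id Fin.castSucc)) (Term.var (Sum.inr (Fin.last n))))

variable {X : Type*} [SpiderLang.Structure X]

@[simp] lemma realize_fHub (t : SpiderLang.Term (Empty ⊕ Fin n)) (v : Empty → X) (xs : Fin n → X) :
    (fHub t).Realize v xs ↔ IsHub (t.realize (Sum.elim v xs)) := by
  simp [fHub, fU₀, fR, IsHub, U₀, RRel, Sum.elim_comp_map, Fin.snoc_comp_castSucc]

variable (X)

def σdisjoint : SpiderLang.Sentence := ∀' ∼(fU₀ &0 ⊓ fU₁ &0)

def σnRel : SpiderLang.Sentence :=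
  ∀' ∀' (fN &0 &1 ⇔ (((fU₁ &0 ⊓ fU₁ &1) ⊔ (fU₂ &0 ⊓ fU₂ &1)) ⊓ ∼(&0 =' &1)))

def σrRel : SpiderLang.Sentence := ∀' ∀' (fR &0 &1 ⟹ (fU₀ &0 ⊓ ∼(fU₀ &1)))

def σhub : SpiderLang.Sentence := ∃' (fHub &0 ⊓ ∀' (fHub &1 ⟹ &1 =' &0))

def σlegEnd (b : Bool) : SpiderLang.Sentence :=
  ∀' (fU₀ &0 ⟹ ∼(fHub &0) ⟹
    ∃' ((fLayer b &1 ⊓ fR &0 &1) ⊓ ∀' ((fLayer b &2 ⊓ fR &0 &2) ⟹ &2 =' &1)))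

def σlegEnd_injective (b : Bool) : SpiderLang.Sentence :=
  ∀' ∀' ∀' (fU₀ &0 ⟹ ∼(fHub &0) ⟹ fU₀ &1 ⟹ ∼(fHub &1) ⟹ fLayer b &2 ⟹
    fR &0 &2 ⟹ fR &1 &2 ⟹ &0 =' &1)

def σspare (b : Bool) : SpiderLang.Sentence :=
  ∃' ((fLayer b &0 ⊓ ∀' (fU₀ &1 ⟹ ∼(fHub &1) ⟹ ∼(fR &1 &0))) ⊓
    ∀' ((fLayer b &1 ⊓ ∀' (fU₀ &2 ⟹ ∼(fHub &2) ⟹ ∼(fR &2 &1))) ⟹ &1 =' &0))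

attribute [local simp] fU₀ fU₁ fU₂ fN fR U₀ U₁ U₂ NRel RRel Sentence.Realize Formula.Realize
  Fin.snoc

lemma realize_σdisjoint : X ⊨ σdisjoint ↔ ∀ x : X, ¬ (U₀ x ∧ U₁ x) := by simp [σdisjoint]

lemma realize_σnRel :
    X ⊨ σnRel ↔ ∀ x y : X, NRel x y ↔ ((U₁ x ∧ U₁ y) ∨ (U₂ x ∧ U₂ y)) ∧ x ≠ y := by
  simp [σnRel]

lemma realize_σrRel : X ⊨ σrRel ↔ ∀ x y : X, RRel x y → U₀ x ∧ ¬ U₀ y := by simp [σrRel]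

lemma realize_σhub : X ⊨ σhub ↔ ∃! a : X, IsHub a := by simp [σhub, ExistsUnique]

lemma realize_σlegEnd (b : Bool) : X ⊨ σlegEnd b ↔
    ∀ x : X, U₀ x → ¬ IsHub x → ∃! y, Layer b y ∧ RRel x y := by
  cases b <;> simp [σlegEnd, ExistsUnique, fLayer, Layer]

lemma realize_σlegEnd_injective (b : Bool) : X ⊨ σlegEnd_injective b ↔
    ∀ x x' y : X, U₀ x → ¬ IsHub x → U₀ x' → ¬ IsHub x' → Layer b y →
      RRel x y → RRel x' y → x = x' := by
  cases b <;> simp [σlegEnd_injective, fLayer, Layer]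

lemma realize_σspare (b : Bool) : X ⊨ σspare b ↔
    ∃! y : X, Layer b y ∧ ∀ x, U₀ x → ¬ IsHub x → ¬ RRel x y := by
  cases b <;> simp [σspare, ExistsUnique, fLayer, Layer]

end Sentences

structure IsSpider (X : Type*) [SpiderLang.Structure X] : Prop where
  disjoint : ∀ x : X, ¬ (U₀ x ∧ U₁ x)
  nRel_iff : ∀ x y : X, NRel x y ↔ ((U₁ x ∧ U₁ y) ∨ (U₂ x ∧ U₂ y)) ∧ x ≠ y
  rRel_dom : ∀ x y : X, RRel x y → U₀ x ∧ ¬ U₀ y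
  existsUnique_hub : ∃! a : X, IsHub a
  existsUnique_legEnd : ∀ b (x : X), U₀ x → ¬ IsHub x → ∃! y, Layer b y ∧ RRel x y
  legEnd_injective : ∀ b (x x' y : X), U₀ x → ¬ IsHub x → U₀ x' → ¬ IsHub x' → Layer b y →
    RRel x y → RRel x' y → x = x'
  existsUnique_spare : ∀ b, ∃! y : X, Layer b y ∧ ∀ x, U₀ x → ¬ IsHub x → ¬ RRel x y

section Standard

lemma U₀_spiderDom (x : SpiderDom) : U₀ x ↔ x.2 = 0 := Iff.rfl
lemma U₁_spiderDom (x : SpiderDom) : U₁ x ↔ x.2 = 1 := Iff.rfl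
lemma rRel_spiderDom (x y : SpiderDom) : RRel x y ↔ SpiderR x y := Iff.rfl

lemma U₂_spiderDom (x : SpiderDom) : U₂ x ↔ x.2 = 2 := by
  simp only [U₂, U₀_spiderDom, U₁_spiderDom]
  omega

lemma layer_spiderDom (b : Bool) (x : SpiderDom) : Layer b x ↔ x.2 = cond b 1 2 := by
  cases b
  exacts [U₂_spiderDom x, U₁_spiderDom x]

lemma isHub_spiderDom (a : SpiderDom) : IsHub a ↔ a = (0, 0) := by
  constructor
  · rintro ⟨h0, hR⟩
    have h1 := hR (0, 1) (by simp [U₀_spiderDom])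
    have h2 := hR (1, 1) (by simp [U₀_spiderDom])
    simp only [rRel_spiderDom, SpiderR] at h1 h2
    grind
  · rintro rfl
    refine ⟨rfl, fun y hy => ?_⟩
    simp only [U₀_spiderDom, rRel_spiderDom, SpiderR] at hy ⊢
    grind

lemma isSpider_spiderDom : IsSpider SpiderDom where
  disjoint x := by simp only [U₀_spiderDom, U₁_spiderDom]; omega
  nRel_iff x y := by simp only [U₁_spiderDom, U₂_spiderDom]; rfl
  rRel_dom x y := by simp only [U₀_spiderDom, rRel_spiderDom, SpiderR]; grind
  existsUnique_hub := ⟨(0, 0), (isHub_spiderDom _).2 rfl, fun a => (isHub_spiderDom a).1⟩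
  existsUnique_legEnd b x := by
    simp only [U₀_spiderDom, isHub_spiderDom, layer_spiderDom, rRel_spiderDom, SpiderR]
    intro hx hxh
    exact ⟨(x.1, cond b 1 2), by cases b <;> grind, by cases b <;> grind⟩
  legEnd_injective b x x' y := by
    simp only [U₀_spiderDom, isHub_spiderDom, layer_spiderDom, rRel_spiderDom, SpiderR]
    cases b <;> grind
  existsUnique_spare b := by
    simp only [U₀_spiderDom, isHub_spiderDom, layer_spiderDom, rRel_spiderDom, SpiderR]
    refine ⟨(0, cond b 1 2), by cases b <;> grind, fun y ⟨hy, hfree⟩ => ?_⟩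
    have := hfree (y.1, 0)
    cases b <;> grind

end Standard

lemma isSpider_of_model (M : Type*) [SpiderLang.Structure M]
    [M ⊨ SpiderLang.completeTheory SpiderDom] : IsSpider M := by
  have transfer {φ : SpiderLang.Sentence} {P Q : Prop} (hP : SpiderDom ⊨ φ ↔ P)
      (hQ : M ⊨ φ ↔ Q) (p : P) : Q :=
    hQ.1 ((realize_iff_of_model_completeTheory SpiderDom M φ).2 (hP.2 p))
  have h := isSpider_spiderDom
  exact
    { disjoint := transfer (realize_σdisjoint _) (realize_σdisjoint _) h.disjoint
      nRel_iff := transfer (realize_σnRel _) (realize_σnRel _) h.nRel_iff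
      rRel_dom := transfer (realize_σrRel _) (realize_σrRel _) h.rRel_dom
      existsUnique_hub := transfer (realize_σhub _) (realize_σhub _) h.existsUnique_hub
      existsUnique_legEnd := fun b => transfer (realize_σlegEnd _ b) (realize_σlegEnd _ b)
        (h.existsUnique_legEnd b)
      legEnd_injective := fun b => transfer (realize_σlegEnd_injective _ b)
        (realize_σlegEnd_injective _ b) (h.legEnd_injective b)
      existsUnique_spare := fun b => transfer (realize_σspare _ b) (realize_σspare _ b)
        (h.existsUnique_spare b) }

section Coordinates

variable {X : Type*} [SpiderLang.Structure X]

lemma not_U₀_of_layer {b : Bool} {x : X} (h : IsSpider X) (hx : Layer b x) : ¬ U₀ x := by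
  cases b
  exacts [hx.1, fun h0 => h.disjoint x ⟨h0, hx⟩]

lemma Layer.unique {b b' : Bool} {x : X} (hb : Layer b x) (hb' : Layer b' x) : b = b' := by
  cases b <;> cases b' <;> first | rfl | exact absurd hb hb'.2 | exact absurd hb' hb.2

lemma exists_layer_of_not_U₀ {x : X} (hx : ¬ U₀ x) : ∃ b, Layer b x := by
  by_cases h1 : U₁ x
  exacts [⟨true, h1⟩, ⟨false, hx, h1⟩]

abbrev Leg (X : Type*) [SpiderLang.Structure X] : Type _ := {x : X // U₀ x ∧ ¬ IsHub x}

variable (h : IsSpider X)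

noncomputable def hub : X := h.existsUnique_hub.exists.choose

lemma isHub_hub : IsHub (hub h) := h.existsUnique_hub.exists.choose_spec

lemma eq_hub {a : X} (ha : IsHub a) : a = hub h := h.existsUnique_hub.unique ha (isHub_hub h)

lemma Leg.ne_hub (t : Leg X) : (t : X) ≠ hub h := fun ht => t.2.2 (ht ▸ isHub_hub h)

noncomputable def legEnd (b : Bool) (t : Leg X) : X :=
  (h.existsUnique_legEnd b t t.2.1 t.2.2).exists.choose

lemma layer_legEnd (b : Bool) (t : Leg X) : Layer b (legEnd h b t) :=
  (h.existsUnique_legEnd b t t.2.1 t.2.2).exists.choose_spec.1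

lemma rRel_legEnd (b : Bool) (t : Leg X) : RRel (t : X) (legEnd h b t) :=
  (h.existsUnique_legEnd b t t.2.1 t.2.2).exists.choose_spec.2

lemma eq_legEnd {b : Bool} {t : Leg X} {y : X} (hy : Layer b y) (ht : RRel (t : X) y) :
    y = legEnd h b t :=
  (h.existsUnique_legEnd b t t.2.1 t.2.2).unique ⟨hy, ht⟩ ⟨layer_legEnd h b t, rRel_legEnd h b t⟩

lemma legEnd_injective (b : Bool) : Function.Injective (legEnd h b) := fun t s hts =>
  Subtype.ext <| h.legEnd_injective b t s _ t.2.1 t.2.2 s.2.1 s.2.2 (layer_legEnd h b s)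
    (hts ▸ rRel_legEnd h b t) (rRel_legEnd h b s)

noncomputable def spare (b : Bool) : X := (h.existsUnique_spare b).exists.choose

lemma layer_spare (b : Bool) : Layer b (spare h b) := (h.existsUnique_spare b).exists.choose_spec.1

lemma not_rRel_spare (b : Bool) (t : Leg X) : ¬ RRel (t : X) (spare h b) :=
  (h.existsUnique_spare b).exists.choose_spec.2 t t.2.1 t.2.2

lemma eq_spare {b : Bool} {y : X} (hy : Layer b y) (hfree : ∀ t : Leg X, ¬ RRel (t : X) y) :
    y = spare h b :=
  (h.existsUnique_spare b).unique ⟨hy, fun x hx hxh => hfree ⟨x, hx, hxh⟩⟩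
    ⟨layer_spare h b, fun x hx hxh => not_rRel_spare h b ⟨x, hx, hxh⟩⟩

lemma legEnd_ne_spare (b : Bool) (t : Leg X) : legEnd h b t ≠ spare h b := fun he =>
  not_rRel_spare h b t (he ▸ rRel_legEnd h b t)

noncomputable def param : Option Bool × Option (Leg X) → X
  | (none, none) => hub h
  | (none, some t) => t
  | (some b, none) => spare h b
  | (some b, some t) => legEnd h b t

lemma U₀_param (p : Option Bool × Option (Leg X)) : U₀ (param h p) ↔ p.1 = none := by
  match p with
  | (none, none) => exact iff_of_true (isHub_hub h).1 rfl
  | (none, some t) => exact iff_of_true t.2.1 rfl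
  | (some b, none) => exact iff_of_false (not_U₀_of_layer h (layer_spare h b)) nofun
  | (some b, some t) => exact iff_of_false (not_U₀_of_layer h (layer_legEnd h b t)) nofun

lemma layer_param (b : Bool) (p : Option Bool × Option (Leg X)) :
    Layer b (param h p) ↔ p.1 = some b := by
  match p with
  | (none, none) => exact iff_of_false (fun hb => not_U₀_of_layer h hb (isHub_hub h).1) nofun
  | (none, some t) => exact iff_of_false (fun hb => not_U₀_of_layer h hb t.2.1) nofun
  | (some b', none) =>
    exact ⟨fun hb => congrArg some ((layer_spare h b').unique hb), by
      rintro ⟨⟩; exact layer_spare h _⟩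
  | (some b', some t) =>
    exact ⟨fun hb => congrArg some ((layer_legEnd h b' t).unique hb), by
      rintro ⟨⟩; exact layer_legEnd h _ t⟩

lemma param_fst_eq {p q : Option Bool × Option (Leg X)} (hpq : param h p = param h q) :
    p.1 = q.1 := by
  rcases hp : p.1 with _ | b
  · exact ((U₀_param h q).1 (hpq ▸ (U₀_param h p).2 hp)).symm
  · exact ((layer_param h b q).1 (hpq ▸ (layer_param h b p).2 hp)).symm

lemma param_injective : Function.Injective (param h) := by
  rintro ⟨i, o⟩ ⟨j, o'⟩ hpq
  obtain rfl : i = j := param_fst_eq h hpq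
  rcases i with _ | b <;> rcases o with _ | t <;> rcases o' with _ | s <;>
    simp only [param] at hpq <;>
    first
      | rfl
      | exact absurd hpq.symm (Leg.ne_hub h s)
      | exact absurd hpq (Leg.ne_hub h t)
      | exact absurd hpq.symm (legEnd_ne_spare h b s)
      | exact absurd hpq (legEnd_ne_spare h b t)
      | rw [Subtype.ext hpq]
      | rw [legEnd_injective h b hpq]

lemma param_surjective : Function.Surjective (param h) := by
  intro x
  by_cases hx : U₀ x
  · by_cases hxh : IsHub x
    exacts [⟨(none, none), (eq_hub h hxh).symm⟩, ⟨(none, some ⟨x, hx, hxh⟩), rfl⟩]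
  · obtain ⟨b, hb⟩ := exists_layer_of_not_U₀ hx
    by_cases hleg : ∃ t : Leg X, RRel (t : X) x
    · obtain ⟨t, ht⟩ := hleg
      exact ⟨(some b, some t), (eq_legEnd h hb ht).symm⟩
    · exact ⟨(some b, none), (eq_spare h hb (not_exists.1 hleg)).symm⟩

noncomputable def paramEquiv : Option Bool × Option (Leg X) ≃ X :=
  Equiv.ofBijective (param h) ⟨param_injective h, param_surjective h⟩

lemma rRel_hub_iff (y : X) : RRel (hub h) y ↔ ¬ U₀ y :=
  ⟨fun hy => (h.rRel_dom _ _ hy).2, (isHub_hub h).2 y⟩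

lemma rRel_leg_iff (t : Leg X) (y : X) : RRel (t : X) y ↔ ∃ b, y = legEnd h b t := by
  constructor
  · intro ht
    obtain ⟨b, hb⟩ := exists_layer_of_not_U₀ (h.rRel_dom _ _ ht).2
    exact ⟨b, eq_legEnd h hb ht⟩
  · rintro ⟨b, rfl⟩
    exact rRel_legEnd h b t

lemma rRel_param (p q : Option Bool × Option (Leg X)) :
    RRel (param h p) (param h q) ↔ p.1 = none ∧ q.1 ≠ none ∧ (p.2 = none ∨ p.2 = q.2) := by
  match p with
  | (none, none) =>
    change RRel (hub h) _ ↔ _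
    rw [rRel_hub_iff, U₀_param]
    simp
  | (none, some t) =>
    change RRel (t : X) _ ↔ _
    have hend (b : Bool) : legEnd h b t = param h (some b, some t) := rfl
    rw [rRel_leg_iff h]
    simp only [hend, (param_injective h).eq_iff]
    obtain ⟨j, o'⟩ := q
    cases j <;> simp [eq_comm]
  | (some _, _) =>
    exact iff_of_false (fun hr => nomatch (U₀_param h _).1 (h.rRel_dom _ _ hr).1) (nomatch ·.1)

lemma nRel_param (p q : Option Bool × Option (Leg X)) :
    NRel (param h p) (param h q) ↔
      ((p.1 = some true ∧ q.1 = some true) ∨ (p.1 = some false ∧ q.1 = some false)) ∧ p ≠ q := by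
  rw [h.nRel_iff]
  exact and_congr (or_congr (and_congr (layer_param h true p) (layer_param h true q))
    (and_congr (layer_param h false p) (layer_param h false q))) (param_injective h).ne_iff

end Coordinates

section Transport

variable {X Y : Type*} [SpiderLang.Structure X] [SpiderLang.Structure Y]

def equivOfPreserves (g : X ≃ Y) (hU₀ : ∀ x, U₀ (g x) ↔ U₀ x) (hU₁ : ∀ x, U₁ (g x) ↔ U₁ x)
    (hN : ∀ x y, NRel (g x) (g y) ↔ NRel x y) (hR : ∀ x y, RRel (g x) (g y) ↔ RRel x y) :
    X ≃[SpiderLang] Y where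
  toEquiv := g
  map_fun' f := nomatch f
  map_rel' := by
    intro n r v
    match n, r with
    | 1, r =>
      rw [← FinVec.etaExpand_eq v, ← FinVec.map_eq]
      change Fin 2 at r
      fin_cases r
      exacts [hU₀ (v 0), hU₁ (v 0)]
    | 2, r =>
      rw [← FinVec.etaExpand_eq v, ← FinVec.map_eq]
      change Fin 2 at r
      fin_cases r
      exacts [hN (v 0) (v 1), hR (v 0) (v 1)]

variable (hX : IsSpider X) (hY : IsSpider Y)

noncomputable def legTransport (e : Leg X ≃ Leg Y) : X ≃ Y :=
  (paramEquiv hX).symm.trans (((Equiv.refl _).prodCongr e.optionCongr).trans (paramEquiv hY))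

lemma legTransport_param (e : Leg X ≃ Leg Y) (p : Option Bool × Option (Leg X)) :
    legTransport hX hY e (param hX p) = param hY (p.1, p.2.map e) := by
  change paramEquiv hY _ = _
  rw [show param hX p = paramEquiv hX p from rfl, Equiv.symm_apply_apply]
  rfl

noncomputable def equivOfLegEquiv (e : Leg X ≃ Leg Y) : X ≃[SpiderLang] Y := by
  refine equivOfPreserves (legTransport hX hY e) ?_ ?_ ?_ ?_
  · intro x
    obtain ⟨p, rfl⟩ := param_surjective hX x
    rw [legTransport_param, U₀_param, U₀_param]
  · intro x
    obtain ⟨p, rfl⟩ := param_surjective hX x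
    rw [legTransport_param]
    exact (layer_param hY true _).trans (layer_param hX true p).symm
  · intro x y
    obtain ⟨p, rfl⟩ := param_surjective hX x
    obtain ⟨q, rfl⟩ := param_surjective hX y
    rw [legTransport_param, legTransport_param, nRel_param, nRel_param]
    simp only [ne_eq, Prod.ext_iff, (Option.map_injective e.injective).eq_iff]
  · intro x y
    obtain ⟨p, rfl⟩ := param_surjective hX x
    obtain ⟨q, rfl⟩ := param_surjective hX y
    rw [legTransport_param, legTransport_param, rRel_param, rRel_param]
    simp [Option.map_eq_none_iff, (Option.map_injective e.injective).eq_iff]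

end Transport

open Cardinal in
lemma mk_leg {X : Type*} [SpiderLang.Structure X] [Infinite X] (h : IsSpider X) :
    #(Leg X) = #X := by
  have : Infinite (Leg X) := by
    by_contra hfin
    rw [not_infinite_iff_finite] at hfin
    have := Finite.of_equiv _ (paramEquiv h)
    exact not_finite X
  rw [← mk_congr (paramEquiv h)]
  have h3 : (3 : Cardinal) * #(Leg X) = #(Leg X) :=
    Cardinal.mul_eq_right (aleph0_le_mk _) (ofNat_le_aleph0.trans (aleph0_le_mk _)) three_ne_zero
  simpa using h3.symm

end Spider

/-- The first-order theory of 𝔄 is totally categorical: for every infinite cardinal κ, any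
two models of `Th(𝔄)` of cardinality κ are isomorphic. -/
theorem spider_totally_categorical (κ : Cardinal.{w}) (hκ : Cardinal.aleph0 ≤ κ)
    (M N : Type w) [SpiderLang.Structure M] [SpiderLang.Structure N]
    [M ⊨ SpiderLang.completeTheory SpiderDom] [N ⊨ SpiderLang.completeTheory SpiderDom]
    (hM : Cardinal.mk M = κ) (hN : Cardinal.mk N = κ) :
    Nonempty (M ≃[SpiderLang] N) := by
  have hMs := Spider.isSpider_of_model M
  have hNs := Spider.isSpider_of_model N
  have : Infinite M := Cardinal.infinite_iff.2 (hM ▸ hκ)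
  have : Infinite N := Cardinal.infinite_iff.2 (hN ▸ hκ)
  obtain ⟨e⟩ : Nonempty (Spider.Leg M ≃ Spider.Leg N) := by
    rw [← Cardinal.eq, Spider.mk_leg hMs, Spider.mk_leg hNs, hM, hN]
  exact ⟨Spider.equivOfLegEquiv hMs hNs e⟩
end

section
/- Let A = ℕ × {0,1,2} carry the relations U₀ = ℕ×{0}, U₁ = ℕ×{1}, U₂ = ℕ×{2}, N = {(u,v) ∈ (ℕ×{1})² ∪ (ℕ×{2})² : u ≠ v}, and R = {((n,0),(n,1)) : n ∈ ℕ} ∪ {((n,0),(n,2)) : n ∈ ℕ} ∪ {((0,0),(n,1)) : n ∈ ℕ} ∪ {((0,0),(n,2)) : n ∈ ℕ}. Let C = (ℕ×{1,2}) ∪ {(0,0)} and let ℭ be C equipped with the restrictions of the five relations U₀, U₁, U₂, N, R to C. Then: (1) for every map e : C → C that preserves each of the five restricted relations and every finite subset F of C, there exists a bijection γ : C → C such that both γ and γ⁻¹ preserve the five restricted relations and e agrees with γ on F (ℭ is a model-complete core); and (2) the map h : A → C that fixes every element of ℕ×{1,2} and sends every element of ℕ×{0} to (0,0) preserves the five relations,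 so (A; U₀,U₁,U₂,N,R) and ℭ are homomorphically equivalent. -/
/-- The subset `C = (ℕ×{1,2}) ∪ {(0,0)}`. -/
def SpiderC : Set SpiderDom :=
  {p | p.2 = 1 ∨ p.2 = 2 ∨ p = ((0 : ℕ), (0 : Fin 3))}

/-- A homomorphism of the structure `ℭ` (the restriction of the five relations to `C`)
into itself: a map preserving each of the five restricted relations. -/
def IsHomCC (e : ↥SpiderC → ↥SpiderC) : Prop :=
  (∀ u : ↥SpiderC, (u : SpiderDom).2 = 0 → (e u : SpiderDom).2 = 0) ∧
  (∀ u : ↥SpiderC, (u : SpiderDom).2 = 1 → (e u : SpiderDom).2 = 1) ∧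
  (∀ u : ↥SpiderC, (u : SpiderDom).2 = 2 → (e u : SpiderDom).2 = 2) ∧
  (∀ u v : ↥SpiderC, SpiderN u v → SpiderN (e u) (e v)) ∧
  (∀ u v : ↥SpiderC, SpiderR u v → SpiderR (e u) (e v))

/-- A homomorphism from `(A; U₀,U₁,U₂,N,R)` to `ℭ`. -/
def IsHomAC (f : SpiderDom → ↥SpiderC) : Prop :=
  (∀ u : SpiderDom, u.2 = 0 → (f u : SpiderDom).2 = 0) ∧
  (∀ u : SpiderDom, u.2 = 1 → (f u : SpiderDom).2 = 1) ∧
  (∀ u : SpiderDom, u.2 = 2 → (f u : SpiderDom).2 = 2) ∧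
  (∀ u v : SpiderDom, SpiderN u v → SpiderN (f u) (f v)) ∧
  (∀ u v : SpiderDom, SpiderR u v → SpiderR (f u) (f v))

/-- A homomorphism from `ℭ` to `(A; U₀,U₁,U₂,N,R)`. -/
def IsHomCA (g : ↥SpiderC → SpiderDom) : Prop :=
  (∀ u : ↥SpiderC, (u : SpiderDom).2 = 0 → (g u).2 = 0) ∧
  (∀ u : ↥SpiderC, (u : SpiderDom).2 = 1 → (g u).2 = 1) ∧
  (∀ u : ↥SpiderC, (u : SpiderDom).2 = 2 → (g u).2 = 2) ∧
  (∀ u v : ↥SpiderC, SpiderN u v → SpiderN (g u) (g v)) ∧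
  (∀ u v : ↥SpiderC, SpiderR u v → SpiderR (g u) (g v))

theorem mem_SpiderC_of_ne (p : SpiderDom) (h : p.2 ≠ 0) : p ∈ SpiderC := by
  rcases p with ⟨n, m⟩
  fin_cases m
  · simp at h
  · exact Or.inl rfl
  · exact Or.inr (Or.inl rfl)

/-- The map `h : A → C` fixing `ℕ×{1,2}` pointwise and collapsing `ℕ×{0}` to `(0,0)`. -/
noncomputable def spiderCollapse (p : SpiderDom) : ↥SpiderC :=
  if h : p.2 = 0 then ⟨((0 : ℕ), (0 : Fin 3)), Or.inr (Or.inr rfl)⟩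
  else ⟨p, mem_SpiderC_of_ne p h⟩

/-!
An endomorphism of `ℭ` preserves the colour (the second coordinate), and it is injective: on
each leg `ℕ × {i}` because it preserves `N`, and colour `0` has the single point `(0,0)` in `C`.
Conversely every colour-preserving injection of `C` preserves all five relations, since on `C`
the relation `R` only joins `(0,0)` to the points of the legs. So it suffices to make a
colour-preserving injection agree on a finite set with a colour-preserving permutation; this is
done fibre by fibre, extending a finite partial injection of each fibre to a permutation of it.
-/

theorem Equiv.Perm.exists_eqOn_of_injOn {α : Type*} {f : α → α} {s : Finset α}
    (hf : Set.InjOn f s) : ∃ π : Equiv.Perm α, Set.EqOn π f s := by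
  let g : (s : Set α) ↪ α := ⟨s.restrict f, hf.injective⟩
  cases finite_or_infinite α
  · obtain ⟨π, hπ⟩ := Cardinal.extend_function_finite g ⟨Equiv.refl α⟩
    exact ⟨π, fun a ha => hπ ⟨a, ha⟩⟩
  · have hs : Cardinal.mk (s : Set α) < Cardinal.mk α :=
      (Cardinal.lt_aleph0_of_finite _).trans_le (Cardinal.aleph0_le_mk α)
    obtain ⟨π, hπ⟩ := Cardinal.extend_function_of_lt g hs ⟨Equiv.refl α⟩
    exact ⟨π, fun a ha => hπ ⟨a, ha⟩⟩

theorem Equiv.Perm.exists_fiberwise_eqOn_of_injective {α ι : Type*} (κ : α → ι)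
    {f : α → α} (hf : Function.Injective f) (hκ : ∀ a, κ (f a) = κ a) (s : Finset α) :
    ∃ π : Equiv.Perm α, (∀ a, κ (π a) = κ a) ∧ Set.EqOn π f s := by
  classical
  let fiberMap (i : ι) : {a // κ a = i} → {a // κ a = i} :=
    Subtype.map f fun a ha => (hκ a).trans ha
  have hfiber (i : ι) : ∃ π : Equiv.Perm {a // κ a = i},
      Set.EqOn π (fiberMap i) (s.subtype (κ · = i)) :=
    Equiv.Perm.exists_eqOn_of_injOn (Subtype.map_injective _ hf).injOn
  choose πs hπs using hfiber
  refine ⟨Equiv.ofFiberEquiv πs, Equiv.ofFiberEquiv_map πs, fun a ha => ?_⟩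
  rw [Equiv.ofFiberEquiv_apply]
  exact congrArg Subtype.val (hπs (κ a) (s.mem_subtype.2 ha))

theorem SpiderC.coe_eq_of_snd_eq_zero {u : ↥SpiderC} (h : (u : SpiderDom).2 = 0) :
    (u : SpiderDom) = ((0 : ℕ), (0 : Fin 3)) := by
  rcases u.2 with h' | h' | h' <;> simp_all

theorem SpiderC.snd_eq_one_or_two_of_snd_ne_zero {u : ↥SpiderC} (h : (u : SpiderDom).2 ≠ 0) :
    (u : SpiderDom).2 = 1 ∨ (u : SpiderDom).2 = 2 := by
  rcases u.2 with h' | h' | h' <;> simp_all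

theorem SpiderR.snd_eq_zero_and_snd_eq_one_or_two {u v : SpiderDom} (h : SpiderR u v) :
    u.2 = 0 ∧ (v.2 = 1 ∨ v.2 = 2) := by
  rcases h with ⟨hu, hv, -⟩ | ⟨hu, hv, -⟩ | ⟨rfl, hv⟩ | ⟨rfl, hv⟩ <;> simp_all

theorem IsHomCC.snd_eq {e : ↥SpiderC → ↥SpiderC} (he : IsHomCC e) (u : ↥SpiderC) :
    (e u : SpiderDom).2 = (u : SpiderDom).2 := by
  obtain ⟨h0, h1, h2, -⟩ := he
  rcases u.2 with h | h | h
  · rw [h1 u h, h]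
  · rw [h2 u h, h]
  · have hu : (u : SpiderDom).2 = 0 := by rw [h]
    rw [h0 u hu, hu]

theorem IsHomCC.injective {e : ↥SpiderC → ↥SpiderC} (he : IsHomCC e) :
    Function.Injective e := by
  intro u v huv
  have hsnd : (u : SpiderDom).2 = (v : SpiderDom).2 := by
    rw [← he.snd_eq u, ← he.snd_eq v, huv]
  by_cases hu : (u : SpiderDom).2 = 0
  · exact Subtype.ext ((SpiderC.coe_eq_of_snd_eq_zero hu).trans
      (SpiderC.coe_eq_of_snd_eq_zero (hsnd ▸ hu)).symm)
  · by_contra hne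
    have hN : SpiderN u v := ⟨by
      rcases SpiderC.snd_eq_one_or_two_of_snd_ne_zero hu with h | h <;> simp_all,
      fun h => hne (Subtype.ext h)⟩
    exact (he.2.2.2.1 u v hN).2 (congrArg Subtype.val huv)

theorem isHomCC_iff {e : ↥SpiderC → ↥SpiderC} :
    IsHomCC e ↔ Function.Injective e ∧ ∀ u, (e u : SpiderDom).2 = (u : SpiderDom).2 := by
  refine ⟨fun he => ⟨he.injective, he.snd_eq⟩, fun ⟨hinj, hsnd⟩ => ?_⟩
  refine ⟨fun u hu => (hsnd u).trans hu, fun u hu => (hsnd u).trans hu,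
    fun u hu => (hsnd u).trans hu, fun u v hN => ?_, fun u v hR => ?_⟩
  · refine ⟨by simpa only [hsnd] using hN.1, fun h => hN.2 ?_⟩
    exact congrArg Subtype.val (hinj (Subtype.ext h))
  obtain ⟨hu, hv⟩ := hR.snd_eq_zero_and_snd_eq_one_or_two
  have heu := SpiderC.coe_eq_of_snd_eq_zero ((hsnd u).trans hu)
  rw [← hsnd v] at hv
  rcases hv with hv | hv
  · exact Or.inr (Or.inr (Or.inl ⟨heu, hv⟩))
  · exact Or.inr (Or.inr (Or.inr ⟨heu, hv⟩))

theorem isHomAC_spiderCollapse : IsHomAC spiderCollapse := by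
  have hcoe {p : SpiderDom} (hp : p.2 ≠ 0) : (spiderCollapse p : SpiderDom) = p := by
    simp [spiderCollapse, hp]
  have hzero {p : SpiderDom} (hp : p.2 = 0) :
      (spiderCollapse p : SpiderDom) = ((0 : ℕ), (0 : Fin 3)) := by
    simp [spiderCollapse, hp]
  refine ⟨fun u hu => by rw [hzero hu], fun u hu => by rw [hcoe (by simp [hu]), hu],
    fun u hu => by rw [hcoe (by simp [hu]), hu], fun u v hN => ?_, fun u v hR => ?_⟩
  · have hu : u.2 ≠ 0 := by rcases hN.1 with ⟨h, -⟩ | ⟨h, -⟩ <;> simp [h]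
    have hv : v.2 ≠ 0 := by rcases hN.1 with ⟨-, h⟩ | ⟨-, h⟩ <;> simp [h]
    rwa [SpiderN, hcoe hu, hcoe hv]
  · obtain ⟨hu, hv⟩ := hR.snd_eq_zero_and_snd_eq_one_or_two
    rw [SpiderR, hzero hu, hcoe (by rcases hv with h | h <;> simp [h])]
    rcases hv with hv | hv
    · exact Or.inr (Or.inr (Or.inl ⟨rfl, hv⟩))
    · exact Or.inr (Or.inr (Or.inr ⟨rfl, hv⟩))

theorem isHomCA_val : IsHomCA Subtype.val :=
  ⟨fun _ h => h, fun _ h => h, fun _ h => h, fun _ _ h => h, fun _ _ h => h⟩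

/-- (1) `ℭ` is a model-complete core: every endomorphism agrees on each finite set with an
automorphism; and (2) the collapsing map is a homomorphism `𝔄 → ℭ`, and `𝔄` and `ℭ` are
homomorphically equivalent. -/
theorem spider_core :
    (∀ e : ↥SpiderC → ↥SpiderC, IsHomCC e → ∀ F : Finset ↥SpiderC,
      ∃ γ : ↥SpiderC ≃ ↥SpiderC, IsHomCC γ ∧ IsHomCC γ.symm ∧ ∀ x ∈ F, e x = γ x) ∧
    IsHomAC spiderCollapse ∧
    (∃ f : SpiderDom → ↥SpiderC, IsHomAC f) ∧ (∃ g : ↥SpiderC → SpiderDom, IsHomCA g) := by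
  refine ⟨fun e he F => ?_, isHomAC_spiderCollapse, ⟨_, isHomAC_spiderCollapse⟩,
    ⟨_, isHomCA_val⟩⟩
  obtain ⟨hinj, hsnd⟩ := isHomCC_iff.1 he
  obtain ⟨γ, hγ, hγF⟩ := Equiv.Perm.exists_fiberwise_eqOn_of_injective
    (fun u : ↥SpiderC => (u : SpiderDom).2) hinj hsnd F
  have hγ_symm (u : ↥SpiderC) : (γ.symm u : SpiderDom).2 = (u : SpiderDom).2 := by
    simpa using (hγ (γ.symm u)).symm
  exact ⟨γ, isHomCC_iff.2 ⟨γ.injective, hγ⟩, isHomCC_iff.2 ⟨γ.symm.injective, hγ_symm⟩,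
    fun x hx => (hγF hx).symm⟩
end

section
/- Let X = {(a,b,m) : a,b ∈ ℚ, a ≠ b, m ∈ ℤ/4ℤ} and Y = {(a,b,m) : a,b ∈ ℚ, a < b, m ∈ ℤ/4ℤ}, each carrying the relations R, E, N defined by: R((a,b,m),(c,d,n)) iff (a,b) = (c,d) and n = m+1; E((a,b,m),(c,d,n)) iff (a,b)_m = (c,d)_n and |{a,b} ∩ {c,d}| = 1, where (a,b)_m denotes a if m ∈ {0,2} and b if m ∈ {1,3}; and N((a,b,m),(c,d,n)) iff {a,b} ∩ {c,d} = ∅. Then the map h : X → Y given by h(a,b,m) = (a,b,m) if a < b and h(a,b,m) = (b,a,m+1) if a > b preserves R, E, and N; since the inclusion Y ⊆ X also preserves R, E, and N, the structures 𝔛 = (X;R,E,N) and 𝔜 = (Y;R,E,N) are homomorphically equivalent. -/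
/-- Triples `(a, b, m)` with `a, b ∈ ℚ` and `m ∈ ℤ/4ℤ`. -/
abbrev Trip : Type := ℚ × ℚ × ZMod 4

/-- `(a,b)_m`: equal to `a` if `m ∈ {0,2}` and to `b` if `m ∈ {1,3}`. -/
def selCoord (p : Trip) : ℚ := if p.2.2 = 0 ∨ p.2.2 = 2 then p.1 else p.2.1

/-- The unordered pair `{a, b}` associated with a triple `(a, b, m)`. -/
def pairOf (p : Trip) : Finset ℚ := {p.1, p.2.1}

/-- `R((a,b,m),(c,d,n))` iff `(a,b) = (c,d)` and `n = m + 1`. -/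
def Rrel (u v : Trip) : Prop := u.1 = v.1 ∧ u.2.1 = v.2.1 ∧ v.2.2 = u.2.2 + 1

/-- `E((a,b,m),(c,d,n))` iff `(a,b)_m = (c,d)_n` and `|{a,b} ∩ {c,d}| = 1`. -/
def Erel (u v : Trip) : Prop := selCoord u = selCoord v ∧ (pairOf u ∩ pairOf v).card = 1

/-- `N((a,b,m),(c,d,n))` iff `{a,b} ∩ {c,d} = ∅`. -/
def Nrel (u v : Trip) : Prop := pairOf u ∩ pairOf v = ∅

/-- The domain `Y` of triples `(a, b, m)` with `a < b`. -/
abbrev Ydom : Type := {p : Trip // p.1 < p.2.1}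

/-- A map `Y → Y` preserving the relations `R`, `E`, `N`. -/
def IsHomY (e : Ydom → Ydom) : Prop :=
  (∀ u v : Ydom, Rrel u.1 v.1 → Rrel (e u).1 (e v).1) ∧
  (∀ u v : Ydom, Erel u.1 v.1 → Erel (e u).1 (e v).1) ∧
  (∀ u v : Ydom, Nrel u.1 v.1 → Nrel (e u).1 (e v).1)

/-- The domain `X` of triples `(a, b, m)` with `a ≠ b`. -/
abbrev Xdom : Type := {p : Trip // p.1 ≠ p.2.1}

/-- A map `X → Y` preserving the relations `R`, `E`, `N`. -/
def IsHomXY (f : Xdom → Ydom) : Prop :=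
  (∀ u v : Xdom, Rrel u.1 v.1 → Rrel (f u).1 (f v).1) ∧
  (∀ u v : Xdom, Erel u.1 v.1 → Erel (f u).1 (f v).1) ∧
  (∀ u v : Xdom, Nrel u.1 v.1 → Nrel (f u).1 (f v).1)

/-- A map `Y → X` preserving the relations `R`, `E`, `N`. -/
def IsHomYX (g : Ydom → Xdom) : Prop :=
  (∀ u v : Ydom, Rrel u.1 v.1 → Rrel (g u).1 (g v).1) ∧
  (∀ u v : Ydom, Erel u.1 v.1 → Erel (g u).1 (g v).1) ∧
  (∀ u v : Ydom, Nrel u.1 v.1 → Nrel (g u).1 (g v).1)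

/-- The map `h : X → Y` with `h(a,b,m) = (a,b,m)` if `a < b` and `h(a,b,m) = (b,a,m+1)`
if `a > b`. -/
def collapseXY (p : Xdom) : Ydom :=
  if h : p.1.1 < p.1.2.1 then ⟨p.1, h⟩
  else ⟨(p.1.2.1, p.1.1, p.1.2.2 + 1), lt_of_le_of_ne (not_lt.mp h) (Ne.symm p.2)⟩

/-- The inclusion `Y ⊆ X`. -/
def inclYX (q : Ydom) : Xdom := ⟨q.1, ne_of_lt q.2⟩

lemma selCoord_collapse (p : Xdom) : selCoord (collapseXY p).1 = selCoord p.1 := by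
  unfold collapseXY selCoord
  split
  · rfl
  · simp only
    have h := (by decide : ∀ m : ZMod 4, (m + 1 = 0 ∨ m + 1 = 2) ↔ ¬(m = 0 ∨ m = 2)) p.1.2.2
    by_cases hm : p.1.2.2 = 0 ∨ p.1.2.2 = 2
    · rw [if_neg (fun hc => (h.mp hc) hm), if_pos hm]
    · rw [if_pos (h.mpr hm), if_neg hm]

lemma pairOf_collapse (p : Xdom) : pairOf (collapseXY p).1 = pairOf p.1 := by
  unfold collapseXY pairOf
  split
  · rfl
  · simp only [Finset.pair_comm]

/-- The map `h` is a homomorphism `𝔛 → 𝔜`, the inclusion is a homomorphism `𝔜 → 𝔛`, and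
hence `𝔛` and `𝔜` are homomorphically equivalent. -/
theorem X_Y_homomorphically_equivalent :
    IsHomXY collapseXY ∧ IsHomYX inclYX ∧
      (∃ f : Xdom → Ydom, IsHomXY f) ∧ (∃ g : Ydom → Xdom, IsHomYX g) := by
  have hXY : IsHomXY collapseXY := by
    refine ⟨?_, ?_, ?_⟩
    · intro u v hR
      obtain ⟨h1, h2, h3⟩ := hR
      unfold collapseXY
      by_cases h : u.1.1 < u.1.2.1
      · rw [dif_pos h, dif_pos (h1 ▸ h2 ▸ h)]
        exact ⟨h1, h2, h3⟩
      · rw [dif_neg h, dif_neg (h1 ▸ h2 ▸ h)]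
        exact ⟨h2, h1, by rw [h3]⟩
    · intro u v hE
      exact ⟨by rw [selCoord_collapse, selCoord_collapse]; exact hE.1,
             by rw [pairOf_collapse, pairOf_collapse]; exact hE.2⟩
    · intro u v hN
      show pairOf _ ∩ pairOf _ = ∅
      rw [pairOf_collapse, pairOf_collapse]; exact hN
  have hYX : IsHomYX inclYX := ⟨fun u v h => h, fun u v h => h, fun u v h => h⟩
  exact ⟨hXY, hYX, ⟨collapseXY, hXY⟩, ⟨inclYX, hYX⟩⟩
end

section
/- Let V be the set of 2-element subsets of ℚ, and say x, y ∈ V are adjacent iff |x ∩ y| = 1. Let e : V → V be a map such that whenever x and y are adjacent, e(x) and e(y) are adjacent. Then for every a ∈ ℚ there exists a unique b ∈ ℚ such that e maps P_a into P_b, i.e., for every c ∈ ℚ with c ≠ a, the set e({a,c}) contains b. -/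
/-- The vertex set of the Johnson graph: 2-element subsets of ℚ. -/
abbrev JVert : Type := {s : Finset ℚ // s.card = 2}

/-- From a card-one intersection, extract the unique common element. -/
lemma inter_one {s t : Finset ℚ} (h : (s ∩ t).card = 1) :
    ∃ w, w ∈ s ∧ w ∈ t ∧ ∀ w', w' ∈ s → w' ∈ t → w' = w := by
  obtain ⟨w, hw⟩ := Finset.card_eq_one.mp h
  refine ⟨w, ?_, ?_, ?_⟩
  · have : w ∈ s ∩ t := hw ▸ Finset.mem_singleton_self w
    exact (Finset.mem_inter.mp this).1
  · have : w ∈ s ∩ t := hw ▸ Finset.mem_singleton_self w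
    exact (Finset.mem_inter.mp this).2
  · intro w' h1 h2
    have : w' ∈ s ∩ t := Finset.mem_inter.mpr ⟨h1, h2⟩
    simpa [hw] using this

/-- In a two-element set, any element equals one of two given distinct members. -/
lemma mem_two {s : Finset ℚ} (hs : s.card = 2) {x y z : ℚ} (hx : x ∈ s) (hy : y ∈ s)
    (hxy : x ≠ y) (hz : z ∈ s) : z = x ∨ z = y := by
  have hsub : ({x, y} : Finset ℚ) ⊆ s := by
    intro w hw
    rcases Finset.mem_insert.mp hw with h | h
    · exact h ▸ hx
    · exact (Finset.mem_singleton.mp h) ▸ hy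
  have : s = {x, y} := (Finset.eq_of_subset_of_card_le hsub (by
    rw [hs, Finset.card_pair hxy])).symm
  rw [this] at hz
  simpa using hz

/-- Key combinatorial lemma: four pairwise adjacent 2-sets; if `b` is the common
element of the first two, it belongs to the third as well. -/
lemma key {y1 y2 y z : Finset ℚ}
    (c1 : y1.card = 2) (c2 : y2.card = 2) (cy : y.card = 2) (cz : z.card = 2)
    (h12 : (y1 ∩ y2).card = 1) (h1y : (y1 ∩ y).card = 1) (h2y : (y2 ∩ y).card = 1)
    (h1z : (y1 ∩ z).card = 1) (h2z : (y2 ∩ z).card = 1) (hyz : (y ∩ z).card = 1)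
    {b : ℚ} (hb1 : b ∈ y1) (hb2 : b ∈ y2)
    (hbu : ∀ w', w' ∈ y1 → w' ∈ y2 → w' = b) : b ∈ y := by
  by_contra hby
  -- get u ∈ y1 ∩ y, v ∈ y2 ∩ y
  obtain ⟨u, hu1, huy, huu⟩ := inter_one h1y
  obtain ⟨v, hv2, hvy, hvu⟩ := inter_one h2y
  have hub : u ≠ b := fun h => hby (h ▸ huy)
  have hvb : v ≠ b := fun h => hby (h ▸ hvy)
  have huv : u ≠ v := by
    intro h
    exact hub (hbu u hu1 (h ▸ hv2))
  -- y = {u, v}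
  by_cases hbz : b ∈ z
  · -- then u ∉ z and v ∉ z, contradicting (y ∩ z).card = 1
    obtain ⟨p, hp1, hpz, hpu⟩ := inter_one h1z
    have hpb : p = b := by
      rcases mem_two c1 hb1 hu1 (Ne.symm hub) hp1 with h | h
      · exact h
      · -- p = u; but also b ∈ y1 ∩ z so b = p, so u = b, contradiction
        exact absurd (((hpu b hb1 hbz).trans h).symm) hub
    obtain ⟨q, hq2, hqz, hqu⟩ := inter_one h2z
    have hqb : q = b := by
      rcases mem_two c2 hb2 hv2 (Ne.symm hvb) hq2 with h | h
      · exact h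
      · exact absurd (((hqu b hb2 hbz).trans h).symm) hvb
    have huz : u ∉ z := by
      intro huz
      exact hub ((hpu u hu1 huz).trans hpb)
    have hvz : v ∉ z := by
      intro hvz
      exact hvb ((hqu v hv2 hvz).trans hqb)
    obtain ⟨w, hwy, hwz, _⟩ := inter_one hyz
    rcases mem_two cy huy hvy huv hwy with h | h
    · exact huz (h ▸ hwz)
    · exact hvz (h ▸ hwz)
  · -- b ∉ z : then u ∈ z and v ∈ z, so z = {u,v} = y, contradicting card 1
    obtain ⟨p, hp1, hpz, _⟩ := inter_one h1z
    have hpu : p = u := by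
      rcases mem_two c1 hb1 hu1 (Ne.symm hub) hp1 with h | h
      · exact absurd (h ▸ hpz) hbz
      · exact h
    obtain ⟨q, hq2, hqz, _⟩ := inter_one h2z
    have hqv : q = v := by
      rcases mem_two c2 hb2 hv2 (Ne.symm hvb) hq2 with h | h
      · exact absurd (h ▸ hqz) hbz
      · exact h
    have huz : u ∈ z := hpu ▸ hpz
    have hvz : v ∈ z := hqv ▸ hqz
    -- y ⊆ z: y = {u,v} and both in z
    have hyeq : y = z := by
      have hsub : ({u, v} : Finset ℚ) ⊆ y := by
        intro w hw
        rcases Finset.mem_insert.mp hw with h | h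
        · exact h ▸ huy
        · exact (Finset.mem_singleton.mp h) ▸ hvy
      have hy' : y = {u, v} := (Finset.eq_of_subset_of_card_le hsub (by
        rw [cy, Finset.card_pair huv])).symm
      have hsub' : ({u, v} : Finset ℚ) ⊆ z := by
        intro w hw
        rcases Finset.mem_insert.mp hw with h | h
        · exact h ▸ huz
        · exact (Finset.mem_singleton.mp h) ▸ hvz
      have hz' : z = {u, v} := (Finset.eq_of_subset_of_card_le hsub' (by
        rw [cz, Finset.card_pair huv])).symm
      rw [hy', hz']
    rw [hyeq, Finset.inter_self, cz] at hyz
    exact absurd hyz (by norm_num)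

/-- Adjacency of two star vertices. -/
lemma star_adj {a c c' : ℚ} (hc : c ≠ a) (hc' : c' ≠ a) (hcc' : c ≠ c') :
    (({a, c} : Finset ℚ) ∩ {a, c'}).card = 1 := by
  have : ({a, c} : Finset ℚ) ∩ {a, c'} = {a} := by
    ext x
    simp only [Finset.mem_inter, Finset.mem_insert, Finset.mem_singleton]
    constructor
    · rintro ⟨h1 | h1, h2 | h2⟩ <;> first | exact h1 | exact h2 | exact absurd (h1.symm.trans h2) hcc'
    · rintro rfl; exact ⟨Or.inl rfl, Or.inl rfl⟩
  rw [this, Finset.card_singleton]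

/-- If `e` preserves adjacency in the Johnson graph, then for every `a ∈ ℚ` there is a
unique `b ∈ ℚ` such that `e` maps `P_a` into `P_b`. -/
theorem johnson_star_unique (e : JVert → JVert)
    (he : ∀ x y : JVert, (x.1 ∩ y.1).card = 1 → ((e x).1 ∩ (e y).1).card = 1)
    (a : ℚ) :
    ∃! b : ℚ, ∀ (c : ℚ) (hc : c ≠ a),
      b ∈ (e ⟨{a, c}, Finset.card_pair (Ne.symm hc)⟩).1 := by
  set c₁ : ℚ := a + 1 with hc1def
  set c₂ : ℚ := a + 2 with hc2def
  have hc1 : c₁ ≠ a := by simp [hc1def]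
  have hc2 : c₂ ≠ a := by simp [hc2def]
  have hc12 : c₁ ≠ c₂ := by simp [hc1def, hc2def]
  set x₁ : JVert := ⟨{a, c₁}, Finset.card_pair (Ne.symm hc1)⟩ with hx1def
  set x₂ : JVert := ⟨{a, c₂}, Finset.card_pair (Ne.symm hc2)⟩ with hx2def
  have h12 : ((e x₁).1 ∩ (e x₂).1).card = 1 := he _ _ (star_adj hc1 hc2 hc12)
  obtain ⟨b, hb1, hb2, hbu⟩ := inter_one h12
  refine ⟨b, ?_, ?_⟩
  · intro c hc
    by_cases h1 : c = c₁
    · subst h1; exact hb1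
    by_cases h2 : c = c₂
    · subst h2; exact hb2
    -- pick d distinct from a, c₁, c₂, c
    obtain ⟨d, hd⟩ := Infinite.exists_notMem_finset ({a, c₁, c₂, c} : Finset ℚ)
    simp only [Finset.mem_insert, Finset.mem_singleton, not_or] at hd
    obtain ⟨hda, hd1, hd2, hdc⟩ := hd
    set xc : JVert := ⟨{a, c}, Finset.card_pair (Ne.symm hc)⟩ with hxcdef
    set xd : JVert := ⟨{a, d}, Finset.card_pair (Ne.symm hda)⟩ with hxddef
    exact key (e x₁).2 (e x₂).2 (e xc).2 (e xd).2
      h12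
      (he x₁ xc (star_adj hc1 hc (fun h => h1 h.symm)))
      (he x₂ xc (star_adj hc2 hc (fun h => h2 h.symm)))
      (he x₁ xd (star_adj hc1 hda (fun h => hd1 h.symm)))
      (he x₂ xd (star_adj hc2 hda (fun h => hd2 h.symm)))
      (he xc xd (star_adj hc hda (fun h => hdc h.symm)))
      hb1 hb2 hbu
  · intro b' hb'
    exact hbu b' (hb' c₁ hc1) (hb' c₂ hc2)
end

section
/- Let V be the set of 2-element subsets of ℚ, with E = {(x,y) ∈ V² : |x ∩ y| = 1} and N = {(x,y) ∈ V² : x ∩ y = ∅}. Let e : V → V be a map such that |x ∩ y| = 1 implies |e(x) ∩ e(y)| = 1 and x ∩ y = ∅ implies e(x) ∩ e(y) = ∅. Then for every finite subset F of V there exists a permutation β of ℚ such that e(x) = {β(a), β(b)} for every x = {a,b} ∈ F. (In other words, the structure (V; E, N) is a model-complete core: its endomorphisms are pointwise limits of its automorphisms.) -/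
open Finset Function
open scoped symmDiff

theorem Equiv.Perm.exists_eqOn_of_injective {α : Type*} [Infinite α] {f : α → α}
    (hf : Injective f) (s : Finset α) : ∃ β : Equiv.Perm α, Set.EqOn β f s := by
  obtain ⟨β, hβ⟩ := Cardinal.extend_function_of_lt
    ⟨fun a : (s : Set α) => f a, hf.comp Subtype.val_injective⟩
    (s.finite_toSet.lt_aleph0.trans_le (Cardinal.aleph0_le_mk α)) ⟨Equiv.refl α⟩
  exact ⟨β, fun a ha => hβ ⟨a, ha⟩⟩

namespace Finset

variable {α : Type*} [DecidableEq α]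

theorem erase_subset_of_card_inter_eq_one {X W : Finset α} {p : α} (hX : #X = 2)
    (hpX : p ∈ X) (hpW : p ∉ W) (hXW : #(X ∩ W) = 1) : X.erase p ⊆ W := by
  have hsub : X ∩ W ⊆ X.erase p := fun t ht =>
    mem_erase.2 ⟨fun htp => hpW (htp ▸ (mem_inter.1 ht).2), (mem_inter.1 ht).1⟩
  have heq := eq_of_subset_of_card_le hsub (by rw [card_erase_of_mem hpX, hX, hXW])
  exact heq ▸ inter_subset_right

theorem card_symmDiff_eq_two {X Y : Finset α} (hX : #X = 2) (hY : #Y = 2)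
    (hXY : #(X ∩ Y) = 1) : #(X ∆ Y) = 2 := by
  have := card_union_add_card_inter X Y
  rw [symmDiff_eq_sup_sdiff_inf, sup_eq_union, inf_eq_inter,
    card_sdiff_of_subset inter_subset_union]
  omega

theorem symmDiff_eq_of_card_inter_eq_one {X Y W : Finset α} {p : α} (hX : #X = 2)
    (hY : #Y = 2) (hW : #W = 2) (hpX : p ∈ X) (hpY : p ∈ Y) (hpW : p ∉ W)
    (hXY : #(X ∩ Y) = 1) (hXW : #(X ∩ W) = 1) (hYW : #(Y ∩ W) = 1) : X ∆ Y = W := by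
  have hsub : X ∆ Y ⊆ W := by
    rw [Finset.symmDiff_def]
    refine union_subset (fun t ht => ?_) (fun t ht => ?_)
    · obtain ⟨htX, htY⟩ := mem_sdiff.1 ht
      exact erase_subset_of_card_inter_eq_one hX hpX hpW hXW
        (mem_erase.2 ⟨fun h => htY (h ▸ hpY), htX⟩)
    · obtain ⟨htY, htX⟩ := mem_sdiff.1 ht
      exact erase_subset_of_card_inter_eq_one hY hpY hpW hYW
        (mem_erase.2 ⟨fun h => htX (h ▸ hpX), htY⟩)
  exact eq_of_subset_of_card_le hsub (by rw [hW, card_symmDiff_eq_two hX hY hXY])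

theorem mem_of_pairwise_card_inter_eq_one {X Y Z W : Finset α} {p : α} (hX : #X = 2)
    (hY : #Y = 2) (hZ : #Z = 2) (hW : #W = 2) (hXY : #(X ∩ Y) = 1) (hXZ : #(X ∩ Z) = 1)
    (hXW : #(X ∩ W) = 1) (hYZ : #(Y ∩ Z) = 1) (hYW : #(Y ∩ W) = 1) (hZW : #(Z ∩ W) = 1)
    (hpX : p ∈ X) (hpY : p ∈ Y) : p ∈ W := by
  by_contra hpW
  have hXYW := symmDiff_eq_of_card_inter_eq_one hX hY hW hpX hpY hpW hXY hXW hYW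
  by_cases hpZ : p ∈ Z
  · have hYZ_eq : Y = Z := symmDiff_right_injective X <|
      hXYW.trans (symmDiff_eq_of_card_inter_eq_one hX hZ hW hpX hpZ hpW hXZ hXW hZW).symm
    rw [hYZ_eq, inter_self, hZ] at hYZ
    exact absurd hYZ (by decide)
  · have hZW_eq : Z = W :=
      (symmDiff_eq_of_card_inter_eq_one hX hY hZ hpX hpY hpZ hXY hXZ hYZ).symm.trans hXYW
    rw [hZW_eq, inter_self, hW] at hZW
    exact absurd hZW (by decide)

theorem exists_forall_mem_of_pairwise_card_inter_eq_one {ι : Type*} [Infinite ι]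
    (s : ι → Finset α) (hs : ∀ i, #(s i) = 2) (hst : Pairwise fun i j => #(s i ∩ s j) = 1) :
    ∃ p, ∀ i, p ∈ s i := by
  classical
  obtain ⟨i, j, hij⟩ := exists_pair_ne ι
  obtain ⟨p, hp⟩ := card_eq_one.1 (hst hij)
  have hpij : p ∈ s i ∩ s j := hp ▸ mem_singleton_self p
  refine ⟨p, fun k => ?_⟩
  obtain ⟨l, hl⟩ := Infinite.exists_notMem_finset ({i, j, k} : Finset ι)
  simp only [mem_insert, mem_singleton, not_or] at hl
  obtain ⟨hli, hlj, hlk⟩ := hl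
  by_cases hki : k = i
  · exact hki ▸ (mem_inter.1 hpij).1
  by_cases hkj : k = j
  · exact hkj ▸ (mem_inter.1 hpij).2
  exact mem_of_pairwise_card_inter_eq_one (hs i) (hs j) (hs l) (hs k) (hst hij)
    (hst (Ne.symm hli)) (hst (Ne.symm hki)) (hst (Ne.symm hlj)) (hst (Ne.symm hkj)) (hst hlk)
    (mem_inter.1 hpij).1 (mem_inter.1 hpij).2

theorem card_pair_inter_pair_eq_one (a : α) {b c : α} (hbc : b ≠ c) :
    #(({a, b} : Finset α) ∩ {a, c}) = 1 := by
  rw [← insert_inter_distrib, singleton_inter_of_notMem (by simpa using hbc)]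
  rw [insert_empty, card_singleton]

theorem pair_inter_pair_eq_empty {a b c d : α} (hac : a ≠ c) (had : a ≠ d) (hbc : b ≠ c)
    (hbd : b ≠ d) : ({a, b} : Finset α) ∩ {c, d} = ∅ := by
  simp [hac, had, hbc, hbd]

theorem eq_pair_of_mem {s : Finset α} (hs : #s = 2) {a b : α} (ha : a ∈ s) (hb : b ∈ s)
    (hab : a ≠ b) : s = {a, b} :=
  (eq_of_subset_of_card_le (insert_subset ha (singleton_subset_iff.2 hb))
    (by rw [hs, card_pair hab])).symm

end Finset

namespace JohnsonGraph

variable {α : Type*} [DecidableEq α]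

def pair {a b : α} (h : a ≠ b) : {s : Finset α // #s = 2} := ⟨{a, b}, card_pair h⟩

theorem pair_comm {a b : α} (h : a ≠ b) : pair h = pair h.symm :=
  Subtype.ext (Finset.pair_comm a b)

theorem exists_forall_mem_pair [Infinite α]
    (e : {s : Finset α // #s = 2} → {s : Finset α // #s = 2})
    (heE : ∀ x y, #(x.1 ∩ y.1) = 1 → #((e x).1 ∩ (e y).1) = 1) :
    ∃ f : α → α, ∀ (a b : α) (h : a ≠ b), f a ∈ (e (pair h)).1 := by
  have hstar (a : α) :
      ∃ p, ∀ b : ({a}ᶜ : Set α), p ∈ (e (pair fun h => b.2 h.symm)).1 := by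
    have : Infinite ({a}ᶜ : Set α) := (Set.finite_singleton a).infinite_compl.to_subtype
    exact exists_forall_mem_of_pairwise_card_inter_eq_one _ (fun b => (e _).2)
      fun b c hbc => heE _ _ (card_pair_inter_pair_eq_one a (Subtype.val_injective.ne hbc))
  choose f hf using hstar
  exact ⟨f, fun a b h => hf a ⟨b, h.symm⟩⟩

theorem exists_injective_image_eq [Infinite α]
    (e : {s : Finset α // #s = 2} → {s : Finset α // #s = 2})
    (heE : ∀ x y, #(x.1 ∩ y.1) = 1 → #((e x).1 ∩ (e y).1) = 1)
    (heN : ∀ x y, x.1 ∩ y.1 = ∅ → (e x).1 ∩ (e y).1 = ∅) :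
    ∃ f : α → α, Injective f ∧ ∀ x, (e x).1 = x.1.image f := by
  obtain ⟨f, hf⟩ := exists_forall_mem_pair e heE
  have hinj : Injective f := by
    intro a b hab
    by_contra hne
    obtain ⟨c, hc⟩ := Infinite.exists_notMem_finset ({a, b} : Finset α)
    obtain ⟨d, hd⟩ := Infinite.exists_notMem_finset ({a, b, c} : Finset α)
    simp only [mem_insert, mem_singleton, not_or] at hc hd
    have hac : a ≠ c := Ne.symm hc.1
    have hbd : b ≠ d := Ne.symm hd.2.1
    have hdisj := heN (pair hac) (pair hbd)
      (pair_inter_pair_eq_empty hne (Ne.symm hd.1) hc.2 (Ne.symm hd.2.2))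
    have hmem : f a ∈ (e (pair hac)).1 ∩ (e (pair hbd)).1 :=
      mem_inter.2 ⟨hf a c hac, hab ▸ hf b d hbd⟩
    simp [hdisj] at hmem
  refine ⟨f, hinj, fun x => ?_⟩
  obtain ⟨a, b, hab, hx⟩ := card_eq_two.1 x.2
  obtain rfl : x = pair hab := Subtype.ext hx
  have hfb : f b ∈ (e (pair hab)).1 := pair_comm hab ▸ hf b a hab.symm
  rw [eq_pair_of_mem (e _).2 (hf a b hab) hfb (hinj.ne hab)]
  simp [pair, image_insert]

end JohnsonGraph

/-- If `e` preserves the edge relation `E` and the non-edge relation `N` of the Johnson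
graph, then on every finite subset `F` of the vertices, `e` agrees with the map induced by a
permutation `β` of ℚ: `(V; E, N)` is a model-complete core. -/
theorem johnson_with_nonedges_core (e : JVert → JVert)
    (heE : ∀ x y : JVert, (x.1 ∩ y.1).card = 1 → ((e x).1 ∩ (e y).1).card = 1)
    (heN : ∀ x y : JVert, x.1 ∩ y.1 = ∅ → (e x).1 ∩ (e y).1 = ∅)
    (F : Finset JVert) :
    ∃ β : Equiv.Perm ℚ, ∀ x ∈ F, (e x).1 = x.1.image β := by
  obtain ⟨f, hf, he⟩ := JohnsonGraph.exists_injective_image_eq e heE heN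
  obtain ⟨β, hβ⟩ := Equiv.Perm.exists_eqOn_of_injective hf (F.biUnion Subtype.val)
  exact ⟨β, fun x hx => (he x).trans <|
    image_congr fun a ha => (hβ (mem_biUnion.2 ⟨x, hx, ha⟩)).symm⟩
end

section
/- Let Y = {(a,b,m) : a,b ∈ ℚ, a < b, m ∈ ℤ/4ℤ} with relations: R((a,b,m),(c,d,n)) iff (a,b) = (c,d) and n = m+1; E((a,b,m),(c,d,n)) iff (a,b)_m = (c,d)_n and |{a,b} ∩ {c,d}| = 1, where (a,b)_m denotes a if m ∈ {0,2} and b if m ∈ {1,3}; and N((a,b,m),(c,d,n)) iff {a,b} ∩ {c,d} = ∅. Let V be the set of 2-element subsets of ℚ and π : Y → V, π(a,b,m) = {a,b}. Then: (1) every map e : Y → Y preserving R, E, N satisfies π(u) = π(v) ⟹ π(e(u)) = π(e(v)); (2) the induced map ē on V (ē({a,b}) := π(e(a,b,0)) for a < b) satisfies: |x ∩ y| = 1 implies |ē(x) ∩ ē(y)| = 1, and x ∩ y = ∅ implies ē(x) ∩ ē(y) = ∅; and (3) for every permutation α of ℚ there exists a bijection γ : Y → Y such that γ and γ⁻¹ both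 preserve R, E, N and π(γ(y)) = {α(a), α(b)} whenever π(y) = {a,b}. -/
/-- The projection `π : Y → V`, `(a, b, m) ↦ {a, b}`. -/
def piY (y : Ydom) : JVert := ⟨{y.1.1, y.1.2.1}, Finset.card_pair (ne_of_lt y.2)⟩

/-- A canonical section of `π`: the 2-element set `{a, b}` with `a < b` is sent
to `(a, b, 0)`. -/
def toY (x : JVert) : Ydom :=
  ⟨(x.1.min' (Finset.card_pos.mp (by rw [x.2]; norm_num)),
    x.1.max' (Finset.card_pos.mp (by rw [x.2]; norm_num)), (0 : ZMod 4)),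
   Finset.min'_lt_max'_of_card x.1 (by rw [x.2]; norm_num)⟩

/-! The fibre of `π` over `{a, b}` is an `R`-cycle of length 4, and `R` forces equal images
under `π`, so endomorphisms respect the fibres. Any two vertices of the Johnson graph at
distance one have `E`-related lifts (choose `m` so that `(a,b)_m` is the common point), which
gives the induced map on `V`. A permutation `α` of `ℚ` lifts by applying it to both coordinates,
re-sorting the pair and, when the order is reversed, shifting `m` by an odd amount: this keeps
`(a,b)_m` equal to the image of the old selected coordinate while preserving `R`. -/

lemma eq_and_eq_of_pair_eq_pair {α : Type*} [LinearOrder α] {a b c d : α} (hab : a < b)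
    (hcd : c < d) (h : ({a, b} : Finset α) = {c, d}) : a = c ∧ b = d := by
  have hset : ({a, b} : Set α) = {c, d} := by
    simpa using congrArg (fun s : Finset α => (s : Set α)) h
  rcases Set.pair_eq_pair_iff.1 hset with h' | ⟨rfl, rfl⟩
  · exact h'
  · exact absurd (hab.trans hcd) (lt_irrefl a)

lemma piY_val (y : Ydom) : (piY y).1 = pairOf y.1 := rfl

lemma piY_toY (x : JVert) : piY (toY x) = x := by
  apply Subtype.ext
  apply Finset.eq_of_subset_of_card_le
  · intro t ht
    simp only [piY, toY, Finset.mem_insert, Finset.mem_singleton] at ht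
    rcases ht with rfl | rfl
    · exact x.1.min'_mem _
    · exact x.1.max'_mem _
  · rw [x.2, (piY (toY x)).2]

lemma selCoord_zero (a b : ℚ) : selCoord (a, b, 0) = a := by
  simp [selCoord]

lemma selCoord_one (a b : ℚ) : selCoord (a, b, 1) = b := by
  simp [selCoord, show ¬((1 : ZMod 4) = 0 ∨ (1 : ZMod 4) = 2) by decide]

lemma exists_selCoord_eq {a b t : ℚ} (ht : t ∈ ({a, b} : Finset ℚ)) :
    ∃ m, selCoord (a, b, m) = t := by
  rcases Finset.mem_insert.1 ht with rfl | htb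
  · exact ⟨0, selCoord_zero _ _⟩
  · rw [Finset.mem_singleton.1 htb]
    exact ⟨1, selCoord_one _ _⟩

lemma exists_erel_of_card_inter_eq_one {u₀ v₀ : Ydom}
    (h : (pairOf u₀.1 ∩ pairOf v₀.1).card = 1) :
    ∃ u v : Ydom, piY u = piY u₀ ∧ piY v = piY v₀ ∧ Erel u.1 v.1 := by
  obtain ⟨⟨a, b, m₀⟩, hab⟩ := u₀
  obtain ⟨⟨c, d, n₀⟩, hcd⟩ := v₀
  obtain ⟨t, ht⟩ := Finset.card_eq_one.1 h
  have ht_mem : t ∈ pairOf (a, b, m₀) ∩ pairOf (c, d, n₀) := by simp [ht]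
  obtain ⟨m, hm⟩ := exists_selCoord_eq (Finset.mem_inter.1 ht_mem).1
  obtain ⟨n, hn⟩ := exists_selCoord_eq (Finset.mem_inter.1 ht_mem).2
  exact ⟨⟨(a, b, m), hab⟩, ⟨(c, d, n), hcd⟩, rfl, rfl, hm.trans hn.symm, h⟩

namespace IsHomY

variable {e : Ydom → Ydom}

lemma piY_eq_of_rrel (he : IsHomY e) {u v : Ydom} (h : Rrel u.1 v.1) :
    piY (e u) = piY (e v) := by
  obtain ⟨h₁, h₂, -⟩ := he.1 u v h
  exact Subtype.ext (by simp only [piY, h₁, h₂])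

lemma piY_eq_piY_zero (he : IsHomY e) {a b : ℚ} (hab : a < b) (m : ZMod 4) :
    piY (e ⟨(a, b, m), hab⟩) = piY (e ⟨(a, b, 0), hab⟩) := by
  suffices ∀ n : ℕ, piY (e ⟨(a, b, n), hab⟩) = piY (e ⟨(a, b, 0), hab⟩) by
    simpa using this m.val
  intro n
  induction n with
  | zero => simp
  | succ n ih =>
    rw [← ih, Nat.cast_succ]
    exact (he.piY_eq_of_rrel (u := ⟨(a, b, n), hab⟩) (v := ⟨(a, b, n + 1), hab⟩)
      ⟨rfl, rfl, rfl⟩).symm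

theorem piY_eq (he : IsHomY e) {u v : Ydom} (h : piY u = piY v) : piY (e u) = piY (e v) := by
  obtain ⟨⟨a, b, m⟩, hab⟩ := u
  obtain ⟨⟨c, d, n⟩, hcd⟩ := v
  obtain ⟨rfl, rfl⟩ := eq_and_eq_of_pair_eq_pair hab hcd (congrArg Subtype.val h)
  rw [he.piY_eq_piY_zero hab m, he.piY_eq_piY_zero hab n]

theorem card_inter_piY_eq_one (he : IsHomY e) {u v : Ydom}
    (h : (pairOf u.1 ∩ pairOf v.1).card = 1) :
    ((piY (e u)).1 ∩ (piY (e v)).1).card = 1 := by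
  obtain ⟨u', v', hu, hv, hE⟩ := exists_erel_of_card_inter_eq_one h
  rw [← he.piY_eq hu, ← he.piY_eq hv]
  exact (he.2.1 u' v' hE).2

end IsHomY

def liftMap (α : Equiv.Perm ℚ) (c : ZMod 4) (y : Ydom) : Ydom :=
  if h : α y.1.1 < α y.1.2.1 then ⟨(α y.1.1, α y.1.2.1, y.1.2.2), h⟩
  else ⟨(α y.1.2.1, α y.1.1, y.1.2.2 + c),
    lt_of_le_of_ne (not_lt.1 h) fun h' => y.2.ne' (α.injective h')⟩

section liftMap

variable (α : Equiv.Perm ℚ)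

lemma pairOf_liftMap (c : ZMod 4) (y : Ydom) :
    pairOf (liftMap α c y).1 = (pairOf y.1).image α := by
  unfold liftMap pairOf
  split <;> simp [Finset.pair_comm]

lemma selCoord_liftMap {c : ZMod 4} (hc : c = 1 ∨ c = -1) (y : Ydom) :
    selCoord (liftMap α c y).1 = α (selCoord y.1) := by
  have parity_flip : ∀ m : ZMod 4, (m + c = 0 ∨ m + c = 2) ↔ ¬(m = 0 ∨ m = 2) := by
    rcases hc with rfl | rfl <;> decide
  obtain ⟨⟨a, b, m⟩, hab⟩ := y
  unfold liftMap selCoord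
  split
  · exact (apply_ite α _ _ _).symm
  · by_cases hm : m = 0 ∨ m = 2 <;> simp [hm, parity_flip]

lemma rrel_liftMap (c : ZMod 4) {u v : Ydom} (h : Rrel u.1 v.1) :
    Rrel (liftMap α c u).1 (liftMap α c v).1 := by
  obtain ⟨⟨a, b, m⟩, hab⟩ := u
  obtain ⟨⟨a', b', n⟩, hab'⟩ := v
  obtain ⟨rfl, rfl, rfl⟩ := h
  unfold liftMap
  split
  · exact ⟨rfl, rfl, rfl⟩
  · exact ⟨rfl, rfl, add_right_comm _ _ _⟩

lemma isHomY_liftMap {c : ZMod 4} (hc : c = 1 ∨ c = -1) : IsHomY (liftMap α c) := by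
  have image_inter (u v : Ydom) : pairOf (liftMap α c u).1 ∩ pairOf (liftMap α c v).1 =
      (pairOf u.1 ∩ pairOf v.1).image α := by
    rw [pairOf_liftMap, pairOf_liftMap, Finset.image_inter _ _ α.injective]
  refine ⟨fun u v => rrel_liftMap α c, fun u v ⟨hsel, hcard⟩ => ⟨?_, ?_⟩, fun u v h => ?_⟩
  · rw [selCoord_liftMap α hc, selCoord_liftMap α hc, hsel]
  · rw [image_inter, Finset.card_image_of_injective _ α.injective, hcard]
  · rw [Nrel, image_inter, h, Finset.image_empty]

lemma liftMap_symm_liftMap (c : ZMod 4) (y : Ydom) :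
    liftMap α.symm (-c) (liftMap α c y) = y := by
  obtain ⟨⟨a, b, m⟩, hab⟩ := y
  unfold liftMap
  by_cases hlt : α a < α b
  · simp [hlt, hab]
  · simp [hlt, hab.le.not_gt]

def liftPerm : Equiv.Perm Ydom where
  toFun := liftMap α 1
  invFun := liftMap α.symm (-1)
  left_inv := liftMap_symm_liftMap α 1
  right_inv y := by simpa using liftMap_symm_liftMap α.symm (-1) y

lemma isHomY_liftPerm : IsHomY (liftPerm α) := isHomY_liftMap α (Or.inl rfl)

lemma isHomY_liftPerm_symm : IsHomY (liftPerm α).symm := isHomY_liftMap α.symm (Or.inr rfl)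

lemma piY_liftPerm (y : Ydom) : (piY (liftPerm α y)).1 = (piY y).1.image α :=
  pairOf_liftMap α 1 y

end liftMap

/-- `π : 𝔜 → 𝔍` is a finite covering map: (1) every endomorphism `e` of `𝔜` preserves the
kernel of `π`; (2) the induced map on `V` preserves the edge and non-edge relations of the
Johnson graph; and (3) every permutation of ℚ lifts to an automorphism of `𝔜`. -/
theorem Y_finite_cover_of_johnson :
    (∀ e : Ydom → Ydom, IsHomY e →
      ∀ u v : Ydom, piY u = piY v → piY (e u) = piY (e v)) ∧
    (∀ e : Ydom → Ydom, IsHomY e → ∀ x y : JVert,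
      ((x.1 ∩ y.1).card = 1 →
        ((piY (e (toY x))).1 ∩ (piY (e (toY y))).1).card = 1) ∧
      (x.1 ∩ y.1 = ∅ → (piY (e (toY x))).1 ∩ (piY (e (toY y))).1 = ∅)) ∧
    (∀ α : Equiv.Perm ℚ, ∃ γ : Equiv.Perm Ydom,
      IsHomY ⇑γ ∧ IsHomY ⇑γ.symm ∧
      ∀ y : Ydom, (piY (γ y)).1 = (piY y).1.image α) := by
  refine ⟨fun e he u v => he.piY_eq, fun e he x y => ⟨fun h => ?_, fun h => ?_⟩,
    fun α => ⟨liftPerm α, isHomY_liftPerm α, isHomY_liftPerm_symm α, piY_liftPerm α⟩⟩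
  · exact he.card_inter_piY_eq_one (by rwa [← piY_val, ← piY_val, piY_toY, piY_toY])
  · exact he.2.2 _ _ (by rwa [Nrel, ← piY_val, ← piY_val, piY_toY, piY_toY])
end

section
/- Let Y = {(a,b,m) : a,b ∈ ℚ, a < b, m ∈ ℤ/4ℤ} with relations: R((a,b,m),(c,d,n)) iff (a,b) = (c,d) and n = m+1; E((a,b,m),(c,d,n)) iff (a,b)_m = (c,d)_n and |{a,b} ∩ {c,d}| = 1, where (a,b)_m denotes a if m ∈ {0,2} and b if m ∈ {1,3}; and N((a,b,m),(c,d,n)) iff {a,b} ∩ {c,d} = ∅. Let H ⊆ ℚ with |H| ≥ 3, and let e : Y → Y preserve R, E, N and satisfy: for all a,b ∈ H with a < b and all m ∈ ℤ/4ℤ, the first two coordinates of e(a,b,m) are again (a,b). Then there exists a set S of 2-element subsets of ℚ such that for all a,b ∈ H with a < b and all m ∈ ℤ/4ℤ: e(a,b,m) = (a,b,m+2) if {a,b} ∈ S, and e(a,b,m) = (a,b,m) otherwise. -/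
/-!
Preserving `R` forces `e` to act on each fibre `{(a, b, m)}` as a rotation `m ↦ m + k(a, b)`.
On pairs from `H`, preserving `E` forces `e` to keep the selected coordinate `(a, b)_m`: along an
`E`-edge the selected coordinate is the unique common point of the two pairs, and a third point
`h ∈ H` provides an `E`-edge from `(a, b, m)` to a triple over `{(a, b)_m, h}`, whose pair is
fixed as well. As `a ≠ b`, `(a, b)_{m + k} = (a, b)_m` means `k ∈ {0, 2}`, and `S` collects the
pairs with `k = 2`.
-/

lemma selCoord_mem_pairOf (p : Trip) : selCoord p ∈ pairOf p := by
  unfold selCoord pairOf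
  split_ifs <;> simp

lemma selCoord_eq_fst_iff {p : Trip} (hp : p.1 ≠ p.2.1) :
    selCoord p = p.1 ↔ p.2.2 = 0 ∨ p.2.2 = 2 := by
  unfold selCoord
  split_ifs with h <;> simp [h, Ne.symm hp]

lemma eq_of_pair_eq_pair {a b c d : ℚ} (hab : a < b) (hcd : c < d)
    (h : ({a, b} : Finset ℚ) = {c, d}) : a = c ∧ b = d := by
  have h' : ({a, b} : Set ℚ) = {c, d} := by
    simpa using congrArg (fun s : Finset ℚ => (s : Set ℚ)) h
  rcases Set.pair_eq_pair_iff.mp h' with h'' | ⟨rfl, rfl⟩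
  · exact h''
  · exact (lt_asymm hab hcd).elim

lemma exists_mem_notMem_pair {α : Type*} [DecidableEq α] {H : Set α}
    (hH : ∃ a b c : α, a ∈ H ∧ b ∈ H ∧ c ∈ H ∧ a ≠ b ∧ a ≠ c ∧ b ≠ c) (x y : α) :
    ∃ z ∈ H, z ∉ ({x, y} : Finset α) := by
  obtain ⟨a, b, c, ha, hb, hc, hab, hac, hbc⟩ := hH
  by_contra! hxy
  have := hxy a ha; have := hxy b hb; have := hxy c hc
  grind

lemma selCoord_eq_of_Erel {u v u' v' : Trip} (h : Erel u v) (h' : Erel u' v')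
    (hu : pairOf u' = pairOf u) (hv : pairOf v' = pairOf v) : selCoord u' = selCoord u := by
  have hmem : selCoord u ∈ pairOf u ∩ pairOf v :=
    Finset.mem_inter.mpr ⟨selCoord_mem_pairOf u, h.1 ▸ selCoord_mem_pairOf v⟩
  have hmem' : selCoord u' ∈ pairOf u ∩ pairOf v := by
    rw [← hu, ← hv]
    exact Finset.mem_inter.mpr ⟨selCoord_mem_pairOf u', h'.1 ▸ selCoord_mem_pairOf v'⟩
  exact Finset.card_le_one.mp h.2.le _ hmem' _ hmem

lemma exists_Erel_of_notMem (u : Ydom) {h : ℚ} (hh : h ∉ pairOf u.1) :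
    ∃ v : Ydom, Erel u.1 v.1 ∧ pairOf v.1 = {selCoord u.1, h} := by
  obtain ⟨s, hs_def⟩ : ∃ s, selCoord u.1 = s := ⟨_, rfl⟩
  have hs : s ∈ pairOf u.1 := hs_def ▸ selCoord_mem_pairOf u.1
  have hsh : s ≠ h := fun hsh => hh (hsh ▸ hs)
  have hinter : (pairOf u.1 ∩ {s, h}).card = 1 := by
    rw [Finset.card_eq_one]
    refine ⟨s, ?_⟩
    ext x
    simp only [Finset.mem_inter, Finset.mem_insert, Finset.mem_singleton]
    constructor
    · rintro ⟨hx, rfl | rfl⟩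
      · rfl
      · exact absurd hx hh
    · rintro rfl
      exact ⟨hs, Or.inl rfl⟩
  rw [hs_def]
  rcases hsh.lt_or_gt with hlt | hgt
  · refine ⟨⟨(s, h, 0), hlt⟩, ⟨?_, hinter⟩, rfl⟩
    rw [hs_def]
    simp [selCoord]
  · refine ⟨⟨(h, s, 1), hgt⟩, ⟨?_, ?_⟩, Finset.pair_comm _ _⟩
    · rw [hs_def]
      simp [selCoord, show ¬((1 : ZMod 4) = 0 ∨ (1 : ZMod 4) = 2) by decide]
    · show (pairOf u.1 ∩ {h, s}).card = 1
      rwa [Finset.pair_comm]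

section
variable {e : Ydom → Ydom}

lemma map_snd_snd_eq_add (hR : ∀ u v : Ydom, Rrel u.1 v.1 → Rrel (e u).1 (e v).1)
    {a b : ℚ} (hab : a < b) (m : ZMod 4) :
    (e ⟨(a, b, m), hab⟩).1.2.2 = (e ⟨(a, b, 0), hab⟩).1.2.2 + m := by
  suffices h : ∀ n : ℕ, (e ⟨(a, b, n), hab⟩).1.2.2 = (e ⟨(a, b, 0), hab⟩).1.2.2 + n by
    simpa using h m.val
  intro n
  induction n with
  | zero => simp
  | succ n ih =>
    have := (hR ⟨(a, b, n), hab⟩ ⟨(a, b, n + 1), hab⟩ ⟨rfl, rfl, rfl⟩).2.2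
    push_cast
    rw [this, ih, add_assoc]

lemma map_eq_rotate (hR : ∀ u v : Ydom, Rrel u.1 v.1 → Rrel (e u).1 (e v).1)
    {a b : ℚ} {hab : a < b} {m : ZMod 4}
    (h : (e ⟨(a, b, m), hab⟩).1.1 = a ∧ (e ⟨(a, b, m), hab⟩).1.2.1 = b) :
    e ⟨(a, b, m), hab⟩ = ⟨(a, b, m + (e ⟨(a, b, 0), hab⟩).1.2.2), hab⟩ :=
  Subtype.ext (Prod.ext h.1 (Prod.ext h.2 (by rw [map_snd_snd_eq_add hR hab m, add_comm])))

lemma pairOf_map_eq_of_subset {H : Set ℚ}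
    (hfix : ∀ (a b : ℚ), a ∈ H → b ∈ H → ∀ (hab : a < b) (m : ZMod 4),
      (e ⟨(a, b, m), hab⟩).1.1 = a ∧ (e ⟨(a, b, m), hab⟩).1.2.1 = b)
    (t : Ydom) (ht : (pairOf t.1 : Set ℚ) ⊆ H) : pairOf (e t).1 = pairOf t.1 := by
  obtain ⟨⟨a, b, m⟩, hab⟩ := t
  rw [pairOf, Finset.coe_pair, Set.pair_subset_iff] at ht
  obtain ⟨h₁, h₂⟩ := hfix a b ht.1 ht.2 hab m
  simp only [pairOf, h₁, h₂]

lemma selCoord_map_eq (hE : ∀ u v : Ydom, Erel u.1 v.1 → Erel (e u).1 (e v).1) {H : Set ℚ}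
    (hfix : ∀ t : Ydom, (pairOf t.1 : Set ℚ) ⊆ H → pairOf (e t).1 = pairOf t.1)
    {u : Ydom} (hu : (pairOf u.1 : Set ℚ) ⊆ H) {h : ℚ} (hH : h ∈ H) (hh : h ∉ pairOf u.1) :
    selCoord (e u).1 = selCoord u.1 := by
  obtain ⟨v, huv, hv⟩ := exists_Erel_of_notMem u hh
  have hvH : (pairOf v.1 : Set ℚ) ⊆ H := by
    rw [hv, Finset.coe_pair, Set.pair_subset_iff]
    exact ⟨hu (selCoord_mem_pairOf u.1), hH⟩
  exact selCoord_eq_of_Erel huv (hE u v huv) (hfix u hu) (hfix v hvH)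

end

/-- If `e` is an endomorphism of `𝔜` whose induced action fixes all pairs from a set
`H ⊆ ℚ` with at least 3 elements, then on the fibers over pairs from `H`, `e` acts either as
the identity or as the double rotation `m ↦ m + 2`, depending only on the pair. -/
theorem local_flip (H : Set ℚ)
    (hH : ∃ a b c : ℚ, a ∈ H ∧ b ∈ H ∧ c ∈ H ∧ a ≠ b ∧ a ≠ c ∧ b ≠ c)
    (e : Ydom → Ydom) (he : IsHomY e)
    (hfix : ∀ (a b : ℚ), a ∈ H → b ∈ H → ∀ (hab : a < b) (m : ZMod 4),
      (e ⟨(a, b, m), hab⟩).1.1 = a ∧ (e ⟨(a, b, m), hab⟩).1.2.1 = b) :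
    ∃ S : Set (Finset ℚ), ∀ (a b : ℚ), a ∈ H → b ∈ H → ∀ (hab : a < b) (m : ZMod 4),
      (({a, b} : Finset ℚ) ∈ S → e ⟨(a, b, m), hab⟩ = ⟨(a, b, m + 2), hab⟩) ∧
      (({a, b} : Finset ℚ) ∉ S → e ⟨(a, b, m), hab⟩ = ⟨(a, b, m), hab⟩) := by
  obtain ⟨hR, hE, -⟩ := he
  have hpair := pairOf_map_eq_of_subset hfix
  have hshift : ∀ a b, a ∈ H → b ∈ H → ∀ hab : a < b,
      (e ⟨(a, b, 0), hab⟩).1.2.2 = 0 ∨ (e ⟨(a, b, 0), hab⟩).1.2.2 = 2 := by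
    intro a b ha hb hab
    obtain ⟨h, hhH, hh⟩ := exists_mem_notMem_pair hH a b
    have hsel := selCoord_map_eq hE hpair (u := ⟨(a, b, 0), hab⟩)
      (by simp [pairOf, Set.insert_subset_iff, ha, hb]) hhH hh
    obtain ⟨h₁, h₂⟩ := hfix a b ha hb hab 0
    rw [← selCoord_eq_fst_iff (by rw [h₁, h₂]; exact hab.ne), hsel, h₁]
    simp [selCoord]
  refine ⟨{s | ∃ a b, ∃ hab : a < b, s = {a, b} ∧ (e ⟨(a, b, 0), hab⟩).1.2.2 = 2}, ?_⟩
  intro a b ha hb hab m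
  rw [map_eq_rotate hR (hfix a b ha hb hab m)]
  constructor
  · rintro ⟨c, d, hcd, hcd_pair, h2⟩
    obtain ⟨rfl, rfl⟩ := eq_of_pair_eq_pair hab hcd hcd_pair
    rw [h2]
  · intro hS
    rcases hshift a b ha hb hab with h0 | h2
    · rw [h0, add_zero]
    · exact absurd ⟨a, b, hab, rfl, h2⟩ hS
end

section
/- Let Y = {(a,b,m) : a,b ∈ ℚ, a < b, m ∈ ℤ/4ℤ} with relations: R((a,b,m),(c,d,n)) iff (a,b) = (c,d) and n = m+1; E((a,b,m),(c,d,n)) iff (a,b)_m = (c,d)_n and |{a,b} ∩ {c,d}| = 1, where (a,b)_m denotes a if m ∈ {0,2} and b if m ∈ {1,3}; and N((a,b,m),(c,d,n)) iff {a,b} ∩ {c,d} = ∅. Then every involution of Aut(𝔜) — i.e., every bijection γ : Y → Y such that γ and γ⁻¹ preserve R, E, N and γ ∘ γ = id — has the form: there exists a set S of pairs (a,b) with a < b such that γ(a,b,m) = (a,b,m+2) if (a,b) ∈ S and γ(a,b,m) = (a,b,m) otherwise. Consequently any two involutions of Aut(𝔜) commute, and there is no injective group homomorphism from the symmetric group of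 all permutations of ℚ into the group Aut(𝔜). -/
/-- An automorphism of `𝔜 = (Y; R, E, N)`. -/
def IsAutY (γ : Equiv.Perm Ydom) : Prop := IsHomY ⇑γ ∧ IsHomY ⇑γ.symm

-- auxiliary lemmas
lemma zmod4_cases : ∀ k : ZMod 4, k = 0 ∨ k = 1 ∨ k = 2 ∨ k = 3 := by decide

lemma sel_mk (u v : ℚ) (m : ZMod 4) :
    selCoord ((u, v, m) : Trip) = if m = 0 ∨ m = 2 then u else v := rfl

lemma pair_mk (u v : ℚ) (m : ZMod 4) : pairOf ((u, v, m) : Trip) = {u, v} := rfl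

lemma ydom_ext {y z : Ydom} (h1 : y.1.1 = z.1.1) (h2 : y.1.2.1 = z.1.2.1)
    (h3 : y.1.2.2 = z.1.2.2) : y = z := by
  apply Subtype.ext
  obtain ⟨⟨a, b, m⟩, _⟩ := y
  obtain ⟨⟨c, d, n⟩, _⟩ := z
  simp_all

lemma pair_inter' {u v x e : ℚ} (hx : x = u ∨ x = v) (hu : u ≠ e) (hv : v ≠ e) :
    (({u, v} : Finset ℚ) ∩ {x, e}) = {x} := by
  ext z
  simp only [Finset.mem_inter, Finset.mem_insert, Finset.mem_singleton]
  constructor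
  · rintro ⟨h4 | h4, h5 | h5⟩ <;> simp_all
  · rintro rfl
    exact ⟨by tauto, Or.inl rfl⟩

lemma fiber (γ : Equiv.Perm Ydom)
    (hR : ∀ u v : Ydom, Rrel u.1 v.1 → Rrel (γ u).1 (γ v).1)
    (a b : ℚ) (hab : a < b) :
    ∃ (c d : ℚ) (hcd : c < d) (k : ZMod 4),
      ∀ m, γ ⟨(a, b, m), hab⟩ = ⟨(c, d, m + k), hcd⟩ := by
  rcases h : γ ⟨(a, b, 0), hab⟩ with ⟨⟨c, d, k⟩, hcd⟩
  refine ⟨c, d, hcd, k, ?_⟩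
  have step : ∀ m n : ZMod 4, n = m + 1 →
      γ ⟨(a, b, m), hab⟩ = ⟨(c, d, m + k), hcd⟩ →
      γ ⟨(a, b, n), hab⟩ = ⟨(c, d, n + k), hcd⟩ := by
    intro m n hmn him
    have hr := hR ⟨(a, b, m), hab⟩ ⟨(a, b, n), hab⟩ ⟨rfl, rfl, hmn⟩
    rw [him] at hr
    obtain ⟨e1, e2, e3⟩ := hr
    refine ydom_ext e1.symm e2.symm ?_
    show _ = n + k
    rw [e3, hmn]
    ring
  have h0 : γ ⟨(a, b, 0), hab⟩ = ⟨(c, d, 0 + k), hcd⟩ := by rw [zero_add]; exact h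
  have h1 := step 0 1 (by decide) h0
  have h2 := step 1 2 (by decide) h1
  have h3 := step 2 3 (by decide) h2
  intro m
  rcases zmod4_cases m with rfl | rfl | rfl | rfl <;> assumption

lemma sel_mem (p : Trip) : selCoord p = p.1 ∨ selCoord p = p.2.1 := by
  unfold selCoord; split <;> simp

lemma selE (γ : Equiv.Perm Ydom)
    (hE : ∀ u v : Ydom, Erel u.1 v.1 → Erel (γ u).1 (γ v).1)
    (p : Ydom) (x : ℚ) (hx : selCoord p.1 = x) :
    selCoord (γ p).1 = selCoord (γ ⟨(x, x + 1, 0), lt_add_one x⟩).1 := by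
  set q1 : Ydom := ⟨(x, x + 1, 0), lt_add_one x⟩ with hq1
  set q2 : Ydom := ⟨(x, x + 2, 0), by show x < x + 2; linarith⟩ with hq2
  have selq1 : selCoord q1.1 = x := by rw [hq1]; exact if_pos (Or.inl rfl)
  have selq2 : selCoord q2.1 = x := by rw [hq2]; exact if_pos (Or.inl rfl)
  have hor : x = p.1.1 ∨ x = p.1.2.1 := by
    rcases sel_mem p.1 with h | h <;> rw [hx] at h <;> [left; right] <;> exact h
  have hlt : p.1.1 < p.1.2.1 := p.2
  by_cases hv : p.1.2.1 = x + 1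
  · -- p's pair is {x, x+1}; go through q2
    have hu : p.1.1 = x := by
      rcases hor with h | h
      · exact h.symm
      · exfalso; rw [← h] at hv; linarith
    have hpq2 : Erel p.1 q2.1 := by
      constructor
      · rw [hx, selq2]
      · have : pairOf p.1 ∩ pairOf q2.1 = {x} := by
          show ({p.1.1, p.1.2.1} : Finset ℚ) ∩ {x, x + 2} = {x}
          exact pair_inter' (Or.inl hu.symm) (by rw [hu]; intro h; linarith)
            (by rw [hv]; intro h; linarith)
        rw [this, Finset.card_singleton]
    have hq12 : Erel q1.1 q2.1 := by
      constructor
      · rw [selq1, selq2]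
      · have : pairOf q1.1 ∩ pairOf q2.1 = {x} := by
          show ({x, x + 1} : Finset ℚ) ∩ {x, x + 2} = {x}
          exact pair_inter' (Or.inl rfl) (by intro h; linarith) (by intro h; linarith)
        rw [this, Finset.card_singleton]
    have e1 := (hE p q2 hpq2).1
    have e2 := (hE q1 q2 hq12).1
    rw [e1, e2]
  · -- x+1 not in p's pair: use q1 directly
    have hu : p.1.1 ≠ x + 1 := by
      intro h
      rcases hor with h' | h' <;> [skip; skip]
      · rw [← h'] at h; linarith
      · rw [h, ← h'] at hlt; linarith
    have hpq1 : Erel p.1 q1.1 := by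
      constructor
      · rw [hx, selq1]
      · have : pairOf p.1 ∩ pairOf q1.1 = {x} := by
          show ({p.1.1, p.1.2.1} : Finset ℚ) ∩ {x, x + 1} = {x}
          exact pair_inter' hor hu hv
        rw [this, Finset.card_singleton]
    exact (hE p q1 hpq1).1

lemma selA {c d : ℚ} {k : ZMod 4} (h : k = 0 ∨ k = 2) : selCoord ((c, d, k) : Trip) = c :=
  if_pos h

lemma selB {c d : ℚ} {k : ZMod 4} (h : ¬(k = 0 ∨ k = 2)) : selCoord ((c, d, k) : Trip) = d :=
  if_neg h

lemma mainLemma (γ : Equiv.Perm Ydom) (haut : IsAutY γ) (hinv : ∀ y, γ (γ y) = y)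
    (a b : ℚ) (hab : a < b) :
    (∀ m, γ ⟨(a, b, m), hab⟩ = ⟨(a, b, m), hab⟩) ∨
    (∀ m, γ ⟨(a, b, m), hab⟩ = ⟨(a, b, m + 2), hab⟩) := by
  obtain ⟨⟨hR, hE, -⟩, -⟩ := haut
  set g : ℚ → ℚ := fun x => selCoord (γ ⟨(x, x + 1, 0), lt_add_one x⟩).1 with hg
  have hgsel : ∀ (p : Ydom) (x : ℚ), selCoord p.1 = x → selCoord (γ p).1 = g x := by
    intro p x hx
    rw [hg]
    exact selE γ hE p x hx
  have key : ∀ (u v : ℚ) (huv : u < v), ∃ (c d : ℚ) (hcd : c < d) (k : ZMod 4),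
      (∀ m, γ ⟨(u, v, m), huv⟩ = ⟨(c, d, m + k), hcd⟩) ∧
      g u = selCoord ((c, d, (0 : ZMod 4) + k) : Trip) ∧
      g v = selCoord ((c, d, (1 : ZMod 4) + k) : Trip) := by
    intro u v huv
    obtain ⟨c, d, hcd, k, hfib⟩ := fiber γ hR u v huv
    refine ⟨c, d, hcd, k, hfib, ?_, ?_⟩
    · have h := hgsel ⟨(u, v, 0), huv⟩ u (if_pos (Or.inl rfl))
      rw [hfib 0] at h
      exact h.symm
    · have h := hgsel ⟨(u, v, 1), huv⟩ v (selB (by decide))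
      rw [hfib 1] at h
      exact h.symm
  have hginv : ∀ x, g (g x) = x := by
    intro x
    have h1 : selCoord (γ ⟨(x, x + 1, 0), lt_add_one x⟩).1 = g x :=
      hgsel _ x (if_pos (Or.inl rfl))
    have h2 := hgsel (γ ⟨(x, x + 1, 0), lt_add_one x⟩) (g x) h1
    rw [hinv] at h2
    rw [← h2]
    exact if_pos (Or.inl rfl)
  have sub : ∀ u v : ℚ, u < v → g u = v → g v = u → False := by
    intro u v huv hguv hgvu
    obtain ⟨c, d, hcd, k, hfib, e1, e2⟩ := key u v huv
    rw [hguv] at e1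
    rw [hgvu] at e2
    rcases zmod4_cases k with rfl | rfl | rfl | rfl
    · rw [show selCoord ((c, d, (0 : ZMod 4) + 0) : Trip) = c from selA (by decide)] at e1
      rw [show selCoord ((c, d, (1 : ZMod 4) + 0) : Trip) = d from selB (by decide)] at e2
      linarith
    · rw [show selCoord ((c, d, (0 : ZMod 4) + 1) : Trip) = d from selB (by decide)] at e1
      rw [show selCoord ((c, d, (1 : ZMod 4) + 1) : Trip) = c from selA (by decide)] at e2
      have hI := hinv ⟨(u, v, 0), huv⟩
      rw [hfib 0] at hI
      have hq : (⟨(c, d, (0 : ZMod 4) + 1), hcd⟩ : Ydom) = ⟨(u, v, 1), huv⟩ :=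
        ydom_ext e2.symm e1.symm (show (0 : ZMod 4) + 1 = 1 by decide)
      rw [hq, hfib 1] at hI
      have h2 := congrArg (fun z : Ydom => z.1.2.2) hI
      exact absurd (show (1 : ZMod 4) + 1 = 0 from h2) (by decide)
    · rw [show selCoord ((c, d, (0 : ZMod 4) + 2) : Trip) = c from selA (by decide)] at e1
      rw [show selCoord ((c, d, (1 : ZMod 4) + 2) : Trip) = d from selB (by decide)] at e2
      linarith
    · rw [show selCoord ((c, d, (0 : ZMod 4) + 3) : Trip) = d from selB (by decide)] at e1
      rw [show selCoord ((c, d, (1 : ZMod 4) + 3) : Trip) = c from selA (by decide)] at e2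
      have hI := hinv ⟨(u, v, 0), huv⟩
      rw [hfib 0] at hI
      have hq : (⟨(c, d, (0 : ZMod 4) + 3), hcd⟩ : Ydom) = ⟨(u, v, 3), huv⟩ :=
        ydom_ext e2.symm e1.symm (show (0 : ZMod 4) + 3 = 3 by decide)
      rw [hq, hfib 3] at hI
      have h2 := congrArg (fun z : Ydom => z.1.2.2) hI
      exact absurd (show (3 : ZMod 4) + 3 = 0 from h2) (by decide)
  have gfix : ∀ x, g x = x := by
    intro x
    by_contra hne
    rcases lt_trichotomy x (g x) with h | h | h
    · exact sub x (g x) h rfl (hginv x)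
    · exact hne h.symm
    · exact sub (g x) x h (hginv x) rfl
  obtain ⟨c, d, hcd, k, hfib, e1, e2⟩ := key a b hab
  rw [gfix a] at e1
  rw [gfix b] at e2
  rcases zmod4_cases k with rfl | rfl | rfl | rfl
  · rw [show selCoord ((c, d, (0 : ZMod 4) + 0) : Trip) = c from selA (by decide)] at e1
    rw [show selCoord ((c, d, (1 : ZMod 4) + 0) : Trip) = d from selB (by decide)] at e2
    left
    intro m
    rw [hfib m]
    exact ydom_ext e1.symm e2.symm (add_zero m)
  · rw [show selCoord ((c, d, (0 : ZMod 4) + 1) : Trip) = d from selB (by decide)] at e1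
    rw [show selCoord ((c, d, (1 : ZMod 4) + 1) : Trip) = c from selA (by decide)] at e2
    exfalso; linarith
  · rw [show selCoord ((c, d, (0 : ZMod 4) + 2) : Trip) = c from selA (by decide)] at e1
    rw [show selCoord ((c, d, (1 : ZMod 4) + 2) : Trip) = d from selB (by decide)] at e2
    right
    intro m
    rw [hfib m]
    exact ydom_ext e1.symm e2.symm rfl
  · rw [show selCoord ((c, d, (0 : ZMod 4) + 3) : Trip) = d from selB (by decide)] at e1
    rw [show selCoord ((c, d, (1 : ZMod 4) + 3) : Trip) = c from selA (by decide)] at e2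
    exfalso; linarith

/-- Every involution of `Aut(𝔜)` is of the form: rotate the fibers over the pairs in some set
`S` by 2 and fix all other elements. Consequently any two involutions of `Aut(𝔜)` commute,
and there is no injective group homomorphism from `Sym(ℚ)` into `Aut(𝔜)`. -/
theorem involutions_of_Y :
    (∀ γ : Equiv.Perm Ydom, IsAutY γ → (∀ y, γ (γ y) = y) →
      ∃ S : Set (ℚ × ℚ), ∀ (a b : ℚ) (hab : a < b) (m : ZMod 4),
        ((a, b) ∈ S → γ ⟨(a, b, m), hab⟩ = ⟨(a, b, m + 2), hab⟩) ∧
        ((a, b) ∉ S → γ ⟨(a, b, m), hab⟩ = ⟨(a, b, m), hab⟩)) ∧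
    (∀ γ δ : Equiv.Perm Ydom, IsAutY γ → IsAutY δ →
      (∀ y, γ (γ y) = y) → (∀ y, δ (δ y) = y) → ∀ y, γ (δ y) = δ (γ y)) ∧
    (¬ ∃ f : Equiv.Perm ℚ → Equiv.Perm Ydom,
      Function.Injective f ∧ (∀ σ, IsAutY (f σ)) ∧
      ∀ σ τ : Equiv.Perm ℚ, f (σ * τ) = f σ * f τ) := by
  have comm : ∀ γ δ : Equiv.Perm Ydom, IsAutY γ → IsAutY δ →
      (∀ y, γ (γ y) = y) → (∀ y, δ (δ y) = y) → ∀ y, γ (δ y) = δ (γ y) := by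
    intro γ δ hγa hδa hγi hδi y
    obtain ⟨⟨a, b, m⟩, hab⟩ := y
    rcases mainLemma γ hγa hγi a b hab with h1 | h1 <;>
      rcases mainLemma δ hδa hδi a b hab with h2 | h2 <;>
      simp only [h1, h2]
  refine ⟨?_, comm, ?_⟩
  · intro γ haut hinv
    refine ⟨{q : ℚ × ℚ | ∃ h : q.1 < q.2, γ ⟨(q.1, q.2, 0), h⟩ = ⟨(q.1, q.2, 2), h⟩}, ?_⟩
    intro a b hab m
    rcases mainLemma γ haut hinv a b hab with hfix | hrot
    · constructor
      · intro hS
        exfalso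
        obtain ⟨h, heq⟩ := hS
        have heq' : γ ⟨(a, b, 0), hab⟩ = ⟨(a, b, 2), hab⟩ := heq
        have h0 := hfix 0
        rw [heq'] at h0
        have h2 := congrArg (fun z : Ydom => z.1.2.2) h0
        exact absurd (show (2 : ZMod 4) = 0 from h2) (by decide)
      · intro _
        exact hfix m
    · constructor
      · intro _
        exact hrot m
      · intro hS
        exfalso
        have h02 : γ ⟨(a, b, 0), hab⟩ = ⟨(a, b, 2), hab⟩ := by
          rw [hrot 0]
          exact ydom_ext rfl rfl (show (0 : ZMod 4) + 2 = 2 by decide)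
        exact hS ⟨hab, h02⟩
  · rintro ⟨f, hinj, hautf, hmul⟩
    have hone : f 1 = 1 := by
      have h := hmul 1 1
      rw [one_mul] at h
      exact left_eq_mul.mp h
    set σ : Equiv.Perm ℚ := Equiv.swap 0 1 with hσdef
    set τ : Equiv.Perm ℚ := Equiv.swap 1 2 with hτdef
    have hσ : ∀ y, f σ (f σ y) = y := by
      have hm : f σ * f σ = 1 := by rw [← hmul, hσdef, Equiv.swap_mul_self, hone]
      intro y
      rw [← Equiv.Perm.mul_apply, hm, Equiv.Perm.one_apply]
    have hτ : ∀ y, f τ (f τ y) = y := by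
      have hm : f τ * f τ = 1 := by rw [← hmul, hτdef, Equiv.swap_mul_self, hone]
      intro y
      rw [← Equiv.Perm.mul_apply, hm, Equiv.Perm.one_apply]
    have hc := comm (f σ) (f τ) (hautf σ) (hautf τ) hσ hτ
    have hfc : f (σ * τ) = f (τ * σ) := by
      rw [hmul, hmul]
      apply Equiv.ext
      intro y
      simp only [Equiv.Perm.mul_apply]
      exact hc y
    have hστ : σ * τ = τ * σ := hinj hfc
    have h2 := congrArg (fun e : Equiv.Perm ℚ => e 2) hστ
    simp only [hσdef, hτdef, Equiv.Perm.mul_apply, Equiv.swap_apply_def] at h2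
    norm_num at h2
end
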